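/- arXiv:2110.03258 — 12 statements merged into one kernel-verified Lean document; each statement's English description precedes it below -/
import Mathlib

section
/- Fix integers K, N, a, b with m = a*N − b*K > 0. The set DPT(K,N,a,b) of standard doubly periodic tableaux with respect to (K,N,a,b) is nonempty if and only if K > 0 and N > 0. -/
/-!
Strict monotonicity in both coordinates makes a tableau grow by at least `v₁ + v₂` along any
vector `v ≥ 0` (and by at most `v₁ + v₂` along `v ≤ 0`), while it is constant along `(K, -N)` and
grows by `m` along `(a, -b)`. Hence `(K, -N)` is not comparable with `0`, and if `K, N < 0` then
`-aN • (K, -N) + KN • (a, -b) = (0, N m)` is a vector `≤ 0` along which the tableau grows by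
`K N m > 0`. Conversely, for `K, N > 0` write `K = d K'`, `N = d N'` with `u K' + v N' = 1`;
then `d (N' x + K' y)` plus a suitable residue in `[0, d)` is a standard doubly periodic tableau.
-/

/-- A standard doubly periodic tableau with respect to `(K, N, a, b)`:
a surjective function `σ : ℤ² → ℤ` with `σ(x+K, y−N) = σ(x,y)`,
`σ(x+a, y−b) = σ(x,y) + (a*N − b*K)`, whose values strictly increase in the
`x` and `y` directions. -/
def IsDPT (K N a b : ℤ) (σ : ℤ × ℤ → ℤ) : Prop :=
  Function.Surjective σ ∧
  (∀ x y : ℤ, σ (x + K, y - N) = σ (x, y)) ∧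
  (∀ x y : ℤ, σ (x + a, y - b) = σ (x, y) + (a * N - b * K)) ∧
  (∀ x y : ℤ, σ (x, y) < σ (x + 1, y)) ∧
  (∀ x y : ℤ, σ (x, y) < σ (x, y + 1))

namespace DPT

section Necessity

variable {f : ℤ × ℤ → ℤ}

theorem add_sub_add_sub_le (hx : ∀ x y, f (x, y) < f (x + 1, y))
    (hy : ∀ x y, f (x, y) < f (x, y + 1)) {p q : ℤ × ℤ} (hpq : p ≤ q) :
    f p + (q.1 - p.1) + (q.2 - p.2) ≤ f q := by
  have mono_x : Monotone fun x => f (x, p.2) - x :=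
    monotone_int_of_le_succ fun x => by linarith [hx x p.2]
  have mono_y : Monotone fun y => f (q.1, y) - y :=
    monotone_int_of_le_succ fun y => by linarith [hy q.1 y]
  have h₁ := mono_x hpq.1
  have h₂ := mono_y hpq.2
  simp only at h₁ h₂
  linarith

theorem add_le_of_map_add (hx : ∀ x y, f (x, y) < f (x + 1, y))
    (hy : ∀ x y, f (x, y) < f (x, y + 1)) {v : ℤ × ℤ} {c : ℤ}
    (hv : ∀ p, f (p + v) = f p + c) (h : 0 ≤ v) : v.1 + v.2 ≤ c := by
  have := add_sub_add_sub_le hx hy (le_add_of_nonneg_right h : (0 : ℤ × ℤ) ≤ 0 + v)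
  simp only [hv, Prod.fst_add, Prod.snd_add, Prod.fst_zero, Prod.snd_zero] at this
  linarith

theorem le_add_of_map_add (hx : ∀ x y, f (x, y) < f (x + 1, y))
    (hy : ∀ x y, f (x, y) < f (x, y + 1)) {v : ℤ × ℤ} {c : ℤ}
    (hv : ∀ p, f (p + v) = f p + c) (h : v ≤ 0) : c ≤ v.1 + v.2 := by
  have hv' : ∀ p, f (p + -v) = f p + -c := fun p => by
    rw [eq_add_neg_iff_add_eq, ← hv, neg_add_cancel_right]
  have := add_le_of_map_add hx hy hv' (neg_nonneg.mpr h)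
  simp only [Prod.fst_neg, Prod.snd_neg] at this
  linarith

theorem map_add_zsmul_add_zsmul {K N a b : ℤ} {σ : ℤ × ℤ → ℤ} (hσ : IsDPT K N a b σ)
    (p : ℤ × ℤ) (k l : ℤ) :
    σ (p + k • (K, -N) + l • (a, -b)) = σ p + l * (a * N - b * K) := by
  obtain ⟨-, hK, hab, -⟩ := hσ
  let period : AddConstMap (ℤ × ℤ) ℤ (K, -N) 0 :=
    ⟨σ, fun ⟨x, y⟩ => by simpa [sub_eq_add_neg] using hK x y⟩
  let shift : AddConstMap (ℤ × ℤ) ℤ (a, -b) (a * N - b * K) :=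
    ⟨σ, fun ⟨x, y⟩ => by simpa [sub_eq_add_neg] using hab x y⟩
  calc σ (p + k • (K, -N) + l • (a, -b))
      = σ (p + k • (K, -N)) + l • (a * N - b * K) := AddConstMapClass.map_add_zsmul shift _ l
    _ = σ p + l * (a * N - b * K) := by
      have hperiod : σ (p + k • (K, -N)) = σ p := by
        have := AddConstMapClass.map_add_zsmul period p k
        rwa [smul_zero, add_zero] at this
      rw [hperiod, smul_eq_mul]

theorem pos_of_isDPT {K N a b : ℤ} {σ : ℤ × ℤ → ℤ} (hm : 0 < a * N - b * K)
    (hσ : IsDPT K N a b σ) : 0 < K ∧ 0 < N := by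
  have ⟨_, _, _, hx, hy⟩ := hσ
  by_contra hKN
  by_cases hneg : K < 0 ∧ N < 0
  · -- `(-a N) • (K, -N) + (K N) • (a, -b) = (0, N m)` is a negative vector with positive increment.
    have hv : ∀ p, σ (p + (0, N * (a * N - b * K))) = σ p + K * N * (a * N - b * K) := by
      intro p
      convert map_add_zsmul_add_zsmul hσ p (-(a * N)) (K * N) using 2
      ext <;> simp <;> ring
    have hle : ((0 : ℤ), N * (a * N - b * K)) ≤ 0 :=
      Prod.mk_le_mk.mpr ⟨le_rfl, (mul_neg_of_neg_of_pos hneg.2 hm).le⟩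
    have := le_add_of_map_add hx hy hv hle
    dsimp only at this
    nlinarith [mul_pos (mul_pos_of_neg_of_neg hneg.1 hneg.2) hm]
  · have hv : ∀ p, σ (p + (K, -N)) = σ p + 0 := fun p => by
      simpa using map_add_zsmul_add_zsmul hσ p 1 0
    have hcomp : 0 ≤ (K, -N) ∨ (K, -N) ≤ 0 := by
      simp only [Prod.le_def, Prod.fst_zero, Prod.snd_zero]
      omega
    obtain ⟨rfl, rfl⟩ : K = 0 ∧ N = 0 := by
      rcases hcomp with h | h
      · have := add_le_of_map_add hx hy hv h
        simp only [Prod.le_def, Prod.fst_zero, Prod.snd_zero] at h this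
        omega
      · have := le_add_of_map_add hx hy hv h
        simp only [Prod.le_def, Prod.fst_zero, Prod.snd_zero] at h this
        omega
    simp at hm

end Necessity

section Construction

variable {d K N a b u v : ℤ}

/-- Along each line `N x + K y = t` the value is `d t` plus a residue mod `d`; the step
`(K, -N)` along the line raises `u x - v y` by `u K + v N = 1`, so the residue runs through all
classes, and the floor term cancels the drift of `u x - v y` under the shift `(a, -b)`. -/
def bezoutTableau (d K N a b u v : ℤ) (p : ℤ × ℤ) : ℤ :=
  d * (N * p.1 + K * p.2) +
    (u * p.1 - v * p.2 - (u * a + v * b) * ((N * p.1 + K * p.2) / (a * N - b * K))) % d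

theorem bezoutTableau_surjective (huv : u * K + v * N = 1) :
    Function.Surjective (bezoutTableau d K N a b u v) := by
  intro n
  set t := n / d
  set s := n % d + (u * a + v * b) * (t / (a * N - b * K))
  have hlevel : N * (t * v + s * K) + K * (t * u - s * N) = t := by
    linear_combination t * huv
  have hresidue : u * (t * v + s * K) - v * (t * u - s * N) = s := by
    linear_combination s * huv
  refine ⟨(t * v + s * K, t * u - s * N), ?_⟩
  simp only [bezoutTableau, hlevel, hresidue, s, add_sub_cancel_right, Int.emod_emod]
  exact Int.mul_ediv_add_emod n d

theorem bezoutTableau_add_period (huv : u * K + v * N = 1) (x y : ℤ) :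
    bezoutTableau d K N a b u v (x + d * K, y - d * N) = bezoutTableau d K N a b u v (x, y) := by
  have hlevel : N * (x + d * K) + K * (y - d * N) = N * x + K * y := by ring
  simp only [bezoutTableau, hlevel]
  set F := (N * x + K * y) / (a * N - b * K)
  have hresidue : u * (x + d * K) - v * (y - d * N) - (u * a + v * b) * F =
      u * x - v * y - (u * a + v * b) * F + d * 1 := by
    linear_combination d * huv
  rw [hresidue, Int.add_mul_emod_self_left]

theorem bezoutTableau_add_shift (hm : a * N - b * K ≠ 0) (x y : ℤ) :
    bezoutTableau d K N a b u v (x + a, y - b) =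
      bezoutTableau d K N a b u v (x, y) + (a * (d * N) - b * (d * K)) := by
  have hlevel : N * (x + a) + K * (y - b) = N * x + K * y + 1 * (a * N - b * K) := by ring
  simp only [bezoutTableau, hlevel, Int.add_mul_ediv_right _ _ hm]
  ring_nf

theorem bezoutTableau_lt_add_one_left (hd : 0 < d) (hN : 0 < N) (x y : ℤ) :
    bezoutTableau d K N a b u v (x, y) < bezoutTableau d K N a b u v (x + 1, y) := by
  simp only [bezoutTableau]
  have h₁ := Int.emod_lt_of_pos
    (u * x - v * y - (u * a + v * b) * ((N * x + K * y) / (a * N - b * K))) hd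
  have h₂ := Int.emod_nonneg
    (u * (x + 1) - v * y - (u * a + v * b) * ((N * (x + 1) + K * y) / (a * N - b * K))) hd.ne'
  nlinarith

theorem bezoutTableau_lt_add_one_right (hd : 0 < d) (hK : 0 < K) (x y : ℤ) :
    bezoutTableau d K N a b u v (x, y) < bezoutTableau d K N a b u v (x, y + 1) := by
  simp only [bezoutTableau]
  have h₁ := Int.emod_lt_of_pos
    (u * x - v * y - (u * a + v * b) * ((N * x + K * y) / (a * N - b * K))) hd
  have h₂ := Int.emod_nonneg
    (u * x - v * (y + 1) - (u * a + v * b) * ((N * x + K * (y + 1)) / (a * N - b * K))) hd.ne'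
  nlinarith

theorem isDPT_bezoutTableau (hd : 0 < d) (hK : 0 < K) (hN : 0 < N) (hm : a * N - b * K ≠ 0)
    (huv : u * K + v * N = 1) :
    IsDPT (d * K) (d * N) a b (bezoutTableau d K N a b u v) :=
  ⟨bezoutTableau_surjective huv, bezoutTableau_add_period huv, bezoutTableau_add_shift hm,
    bezoutTableau_lt_add_one_left hd hN, bezoutTableau_lt_add_one_right hd hK⟩

end Construction

theorem exists_isDPT {K N a b : ℤ} (hK : 0 < K) (hN : 0 < N) (hm : a * N - b * K ≠ 0) :
    ∃ σ, IsDPT K N a b σ := by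
  obtain ⟨g, K', N', hg, hcop, hKg, hNg⟩ :=
    Int.exists_gcd_one' (Int.gcd_pos_iff.mpr (Or.inl hK.ne') : 0 < Int.gcd K N)
  subst hKg hNg
  obtain ⟨u, v, huv⟩ := Int.isCoprime_iff_gcd_eq_one.mpr hcop
  have hg' : (0 : ℤ) < g := by exact_mod_cast hg
  have hm' : a * N' - b * K' ≠ 0 := fun h => hm (by linear_combination (g : ℤ) * h)
  refine ⟨bezoutTableau g K' N' a b u v, ?_⟩
  rw [mul_comm K', mul_comm N']
  exact isDPT_bezoutTableau hg' (pos_of_mul_pos_left hK hg'.le) (pos_of_mul_pos_left hN hg'.le)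
    hm' huv

end DPT

/-- The set `DPT(K,N,a,b)` of standard doubly periodic tableaux is nonempty
iff `K > 0` and `N > 0`. -/
theorem dpt_nonempty_iff (K N a b : ℤ) (hm : 0 < a * N - b * K) :
    (∃ σ : ℤ × ℤ → ℤ, IsDPT K N a b σ) ↔ (0 < K ∧ 0 < N) :=
  ⟨fun ⟨_, hσ⟩ => DPT.pos_of_isDPT hm hσ, fun ⟨hK, hN⟩ => DPT.exists_isDPT hK hN hm.ne'⟩
end

section
/- Fix integers K, N, a, b with m = a*N − b*K > 0 and let σ ∈ DPT(K,N,a,b). Then for every y ∈ ℤ the set {x ∈ ℤ : σ(x,y) ≥ 1} has a minimum, so 𝓛(σ)(y) := min{x : σ(x,y) ≥ 1} is well defined; the function 𝓛 = 𝓛(σ) is a (K,N)-periodic lattice path (weakly decreasing with 𝓛(y+N) = 𝓛(y) − K for all y); it satisfies 𝓛 < 𝓛[a,b]; and Δ'(σ) = Δ'(𝓛), i.e. for all (x,y) ∈ ℤ² one has 1 ≤ σ(x,y) ≤ m if and only if 𝓛(y) ≤ x < 𝓛(y+b) + a. -/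
/-- A `(K,N)`-periodic lattice path. -/
def IsLP (K N : ℤ) (L : ℤ → ℤ) : Prop :=
  Antitone L ∧ ∀ y : ℤ, L (y + N) = L y - K

/-- The shifted path `L[a,b] : y ↦ L(y+b) + a`. -/
def LPshift (a b : ℤ) (L : ℤ → ℤ) : ℤ → ℤ := fun y => L (y + b) + a

/-!
Each row `x ↦ σ (x, y)` is a strictly increasing map `ℤ → ℤ`, so it exceeds `0` exactly from
some threshold `L y` on. Moving up a row only increases `σ`, so `L` is antitone; the period
`(K, -N)` shifts the thresholds by `K`; and the quasi-period `(a, -b)`, which adds `m`, turns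
`σ ≤ m` in row `y` into `σ ≤ 0` in row `y + b`, i.e. into `x < L (y + b) + a`. Surjectivity
provides a cell with value `1`, which makes the strip `Δ'(L)` nonempty, so `L ≠ L[a,b]`.
-/

theorem Int.monotone_sub_self_of_strictMono {f : ℤ → ℤ} (hf : StrictMono f) :
    Monotone fun x => f x - x :=
  monotone_int_of_le_succ fun x => by have := hf (lt_add_one x); omega

theorem Int.exists_forall_le_apply_iff_of_strictMono {f : ℤ → ℤ} (hf : StrictMono f) (c : ℤ) :
    ∃ l, ∀ x, c ≤ f x ↔ l ≤ x := by
  have hg := Int.monotone_sub_self_of_strictMono hf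
  obtain ⟨l, hl, hmin⟩ : ∃ l, c ≤ f l ∧ ∀ x, c ≤ f x → l ≤ x := by
    refine Int.exists_least_of_bdd ⟨min 0 (c - f 0), fun x hx => ?_⟩ ⟨max 0 (c - f 0), ?_⟩
    · by_contra! hlt
      have := hg (hlt.le.trans (min_le_left _ _))
      simp only [sub_zero] at this
      omega
    · have := hg (le_max_left 0 (c - f 0))
      simp only [sub_zero] at this
      omega
  exact ⟨l, fun x => ⟨hmin x, fun h => hl.trans (hf.monotone h)⟩⟩

/-- `L` is the path `𝓛(σ)`. -/
def IsBoundaryPath (σ : ℤ × ℤ → ℤ) (L : ℤ → ℤ) : Prop :=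
  ∀ x y, 1 ≤ σ (x, y) ↔ L y ≤ x

theorem IsBoundaryPath.isLeast {σ : ℤ × ℤ → ℤ} {L : ℤ → ℤ} (hL : IsBoundaryPath σ L) (y : ℤ) :
    IsLeast {x : ℤ | 1 ≤ σ (x, y)} (L y) :=
  ⟨(hL _ _).2 le_rfl, fun x hx => (hL x y).1 hx⟩

namespace IsDPT

variable {K N a b : ℤ} {σ : ℤ × ℤ → ℤ} {L : ℤ → ℤ}

theorem strictMono_row (hσ : IsDPT K N a b σ) (y : ℤ) : StrictMono fun x => σ (x, y) :=
  strictMono_int_of_lt_succ fun x => hσ.2.2.2.1 x y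

theorem monotone_col (hσ : IsDPT K N a b σ) (x : ℤ) : Monotone fun y => σ (x, y) :=
  (strictMono_int_of_lt_succ fun y => hσ.2.2.2.2 x y).monotone

theorem apply_add_right (hσ : IsDPT K N a b σ) (x y : ℤ) : σ (x, y + N) = σ (x + K, y) := by
  simpa using (hσ.2.1 x (y + N)).symm

theorem apply_eq_apply_sub_add (hσ : IsDPT K N a b σ) (x y : ℤ) :
    σ (x, y) = σ (x - a, y + b) + (a * N - b * K) := by
  simpa using hσ.2.2.1 (x - a) (y + b)

theorem exists_isBoundaryPath (hσ : IsDPT K N a b σ) : ∃ L, IsBoundaryPath σ L := by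
  choose L hL using fun y => Int.exists_forall_le_apply_iff_of_strictMono (hσ.strictMono_row y) 1
  exact ⟨L, fun x y => hL y x⟩

theorem isLP_of_isBoundaryPath (hσ : IsDPT K N a b σ) (hL : IsBoundaryPath σ L) :
    IsLP K N L := by
  refine ⟨fun y y' hy => (hL _ _).1 ?_, fun y => eq_of_forall_ge_iff fun x => ?_⟩
  · exact ((hL _ _).2 le_rfl).trans (hσ.monotone_col _ hy)
  · rw [← hL, hσ.apply_add_right, hL]
    omega

theorem le_iff_lt_LPshift (hσ : IsDPT K N a b σ) (hL : IsBoundaryPath σ L) (x y : ℤ) :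
    σ (x, y) ≤ a * N - b * K ↔ x < LPshift a b L y := by
  have := hL (x - a) (y + b)
  rw [hσ.apply_eq_apply_sub_add, LPshift]
  omega

theorem mem_strip_iff (hσ : IsDPT K N a b σ) (hL : IsBoundaryPath σ L) (x y : ℤ) :
    (1 ≤ σ (x, y) ∧ σ (x, y) ≤ a * N - b * K) ↔ (L y ≤ x ∧ x < LPshift a b L y) :=
  and_congr (hL x y) (hσ.le_iff_lt_LPshift hL x y)

theorem le_LPshift (hσ : IsDPT K N a b σ) (hm : 0 < a * N - b * K) (hL : IsBoundaryPath σ L)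
    (y : ℤ) : L y ≤ LPshift a b L y := by
  have := (hL (L (y + b)) (y + b)).2 le_rfl
  rw [← hL, hσ.apply_eq_apply_sub_add, LPshift, add_sub_cancel_right]
  omega

theorem ne_LPshift (hσ : IsDPT K N a b σ) (hm : 0 < a * N - b * K) (hL : IsBoundaryPath σ L) :
    L ≠ LPshift a b L := by
  obtain ⟨⟨x, y⟩, hxy⟩ := hσ.1 1
  have := (hσ.mem_strip_iff hL x y).1 (by omega)
  intro h
  rw [← h] at this
  omega

end IsDPT

/-- For `σ ∈ DPT(K,N,a,b)`: each set `{x : σ(x,y) ≥ 1}` has a minimum `L y`;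
the resulting function `L = 𝓛(σ)` is a `(K,N)`-periodic lattice path with
`L < L[a,b]`, and `Δ'(σ) = Δ'(L)`, i.e. `1 ≤ σ(x,y) ≤ m` iff `L y ≤ x < L(y+b) + a`. -/
theorem dpt_lattice_path (K N a b : ℤ) (hm : 0 < a * N - b * K)
    (σ : ℤ × ℤ → ℤ) (hσ : IsDPT K N a b σ) :
    ∃ L : ℤ → ℤ,
      (∀ y : ℤ, IsLeast {x : ℤ | 1 ≤ σ (x, y)} (L y)) ∧
      IsLP K N L ∧
      (∀ y : ℤ, L y ≤ LPshift a b L y) ∧ L ≠ LPshift a b L ∧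
      (∀ x y : ℤ, (1 ≤ σ (x, y) ∧ σ (x, y) ≤ a * N - b * K) ↔
        (L y ≤ x ∧ x < LPshift a b L y)) := by
  obtain ⟨L, hL⟩ := hσ.exists_isBoundaryPath
  exact ⟨L, hL.isLeast, hσ.isLP_of_isBoundaryPath hL, hσ.le_LPshift hm hL,
    hσ.ne_LPshift hm hL, hσ.mem_strip_iff hL⟩
end

section
/- Let K, N > 0 and a, b ∈ ℤ with m = a*N − b*K > 0, and let 𝓛 be a (K,N)-periodic lattice path with 𝓛 ≤ 𝓛[a,b]. Then for every (x,y) ∈ ℤ² there exists a unique r ∈ ℤ such that (x − r*a, y + r*b) ∈ Δ'(𝓛). -/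
/-- The extended fundamental domain `Δ'(L) = {(x,y) : L y ≤ x < L(y+b) + a}`. -/
def DeltaP (a b : ℤ) (L : ℤ → ℤ) : Set (ℤ × ℤ) :=
  {p : ℤ × ℤ | L p.2 ≤ p.1 ∧ p.1 < LPshift a b L p.2}

/-!
The point `(x - r a, y + r b)` lies in `Δ'(L)` exactly when `h r ≤ x < h (r + 1)` for the height
function `h r = L (y + r b) + r a`. The hypothesis `L ≤ L[a,b]` makes `h` monotone, and periodicity
of `L` gives `h (r + N) = h r + m` with `m = a N - b K > 0`, so `h` is unbounded in both
directions and every `x` falls into exactly one step `[h r, h (r + 1))`.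
-/

open AddConstMap AddConstMapClass

theorem Monotone.existsUnique_le_and_lt_succ {α : Type*} [LinearOrder α] {g : ℤ → α}
    (hg : Monotone g) {c : α} (hlo : ∃ r, g r ≤ c) (hhi : ∃ r, c < g r) :
    ∃! r, g r ≤ c ∧ c < g (r + 1) := by
  obtain ⟨r₀, hr₀⟩ := hlo
  have hbdd : ∀ s, c < g s → r₀ + 1 ≤ s := fun s hs => by
    by_contra! h
    exact (hr₀.trans_lt hs).not_ge (hg (by omega))
  obtain ⟨s, hs, hleast⟩ := Int.exists_least_of_bdd ⟨r₀ + 1, hbdd⟩ hhi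
  refine ⟨s - 1, ⟨?_, by simpa using hs⟩, fun t ⟨hgt, hct⟩ => ?_⟩
  · by_contra! h
    have := hleast _ h
    omega
  · have hst : s ≤ t + 1 := hleast _ hct
    have hts : t + 1 ≤ s := by
      by_contra! h
      exact (hs.trans_le (hg (by omega : s ≤ t))).not_ge hgt
    omega

theorem AddConstMap.existsUnique_le_and_lt_succ {N m : ℤ} (g : ℤ →+c[N, m] ℤ) (hg : Monotone g)
    (hm : 0 < m) (c : ℤ) : ∃! r, g r ≤ c ∧ c < g (r + 1) := by
  refine hg.existsUnique_le_and_lt_succ ⟨-|c - g 0| • N, ?_⟩ ⟨(|c - g 0| + 1) • N, ?_⟩ <;>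
    rw [map_zsmul_const, smul_eq_mul] <;>
    nlinarith [le_abs_self (c - g 0), neg_abs_le (c - g 0)]

def pathShiftHeight (a b : ℤ) (L : ℤ → ℤ) (y r : ℤ) : ℤ := L (y + r * b) + r * a

theorem mem_DeltaP_iff_pathShiftHeight (a b : ℤ) (L : ℤ → ℤ) (x y r : ℤ) :
    (x - r * a, y + r * b) ∈ DeltaP a b L ↔
      pathShiftHeight a b L y r ≤ x ∧ x < pathShiftHeight a b L y (r + 1) := by
  have hy : y + (r + 1) * b = y + r * b + b := by ring
  simp only [DeltaP, LPshift, pathShiftHeight, Set.mem_ofPred_eq, hy]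
  constructor <;> rintro ⟨h₁, h₂⟩ <;> constructor <;> linarith

theorem monotone_pathShiftHeight {a b : ℤ} {L : ℤ → ℤ} (hle : ∀ y, L y ≤ LPshift a b L y)
    (y : ℤ) : Monotone (pathShiftHeight a b L y) :=
  monotone_int_of_le_succ fun r => by
    have hy : y + (r + 1) * b = y + r * b + b := by ring
    have hstep : L (y + r * b) ≤ L (y + r * b + b) + a := hle (y + r * b)
    simp only [pathShiftHeight, hy]
    linarith

theorem pathShiftHeight_add_period {K N a b : ℤ} {L : ℤ → ℤ} (hL : ∀ y, L (y + N) = L y - K)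
    (y r : ℤ) :
    pathShiftHeight a b L y (r + N) = pathShiftHeight a b L y r + (a * N - b * K) := by
  have hLb := map_add_zsmul (⟨L, fun z => (hL z).trans (sub_eq_add_neg _ _)⟩ : ℤ →+c[N, -K] ℤ)
    (y + r * b) b
  simp only [AddConstMap.coe_mk, smul_eq_mul] at hLb
  have hy : y + (r + N) * b = y + r * b + b * N := by ring
  simp only [pathShiftHeight, hy, hLb]
  ring

theorem unique_shift_into_DeltaP_general (K N a b : ℤ)
    (hm : 0 < a * N - b * K)
    (L : ℤ → ℤ) (hL : IsLP K N L) (hle : ∀ y : ℤ, L y ≤ LPshift a b L y)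
    (x y : ℤ) :
    ∃! r : ℤ, (x - r * a, y + r * b) ∈ DeltaP a b L := by
  simp only [mem_DeltaP_iff_pathShiftHeight]
  exact AddConstMap.existsUnique_le_and_lt_succ
    ⟨pathShiftHeight a b L y, pathShiftHeight_add_period hL.2 y⟩ (monotone_pathShiftHeight hle y) hm x

/-- For every `(x,y) ∈ ℤ²` there is a unique `r ∈ ℤ` such that
`(x − r*a, y + r*b) ∈ Δ'(L)`. -/
theorem unique_shift_into_DeltaP (K N a b : ℤ) (hK : 0 < K) (hN : 0 < N)
    (hm : 0 < a * N - b * K)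
    (L : ℤ → ℤ) (hL : IsLP K N L) (hle : ∀ y : ℤ, L y ≤ LPshift a b L y)
    (x y : ℤ) :
    ∃! r : ℤ, (x - r * a, y + r * b) ∈ DeltaP a b L :=
  unique_shift_into_DeltaP_general K N a b hm L hL hle x y
end

section
/- Let K, N > 0 and a, b ∈ ℤ with m = a*N − b*K > 0, and let 𝓛 be a (K,N)-periodic lattice path with 𝓛 ≤ 𝓛[a,b]. Then for every (x,y) ∈ ℤ² there exists a unique quadruple (x', y', s, r) ∈ ℤ⁴ such that (x', y') ∈ Δ(𝓛) and (x, y) = (x' + s*K + r*a, y' − s*N − r*b). -/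
/-- The fundamental domain `Δ(L) = {(x,y) ∈ Δ'(L) : 0 ≤ y < N}`. -/
def Delta (N a b : ℤ) (L : ℤ → ℤ) : Set (ℤ × ℤ) :=
  {p : ℤ × ℤ | p ∈ DeltaP a b L ∧ 0 ≤ p.2 ∧ p.2 < N}

/-!
Fix `y` and put `g r = L[r a, r b](y) = L(y + r b) + r a`. The hypothesis `L ≤ L[a,b]` makes `g`
monotone, and periodicity gives `g (r + N) = g r + m` with `m = a N - b K > 0`, so `g` is unbounded
in both directions and every `x` lies in exactly one step `g r ≤ x < g (r + 1)`. Shifting a point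
by `(s K + r a, -s N - r b)` turns the condition `(x', y') ∈ Δ'(L)` into exactly this condition on
`r`, independently of `s`; and `s` is then pinned down by `0 ≤ y' < N`, i.e. by Euclidean division
of `y + r b` by `N`.
-/

theorem Monotone.existsUnique_le_lt_succ {α : Type*} [LinearOrder α] {g : ℤ → α}
    (hg : Monotone g) (hbot : ∀ x, ∃ r, g r ≤ x) (htop : ∀ x, ∃ r, x < g r) (x : α) :
    ∃! r, g r ≤ x ∧ x < g (r + 1) := by
  have hbdd : ∃ B, ∀ r, g r ≤ x → r ≤ B := by
    obtain ⟨B, hB⟩ := htop x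
    exact ⟨B, fun r hr => (hg.reflect_lt (hr.trans_lt hB)).le⟩
  obtain ⟨r, hr, hr_max⟩ := Int.exists_greatest_of_bdd hbdd (hbot x)
  refine ⟨r, ⟨hr, lt_of_not_ge fun h => by linarith [hr_max _ h]⟩, ?_⟩
  rintro r' ⟨hr', hr'_succ⟩
  refine le_antisymm (hr_max r' hr') (not_lt.1 fun hlt => ?_)
  exact absurd (hg (show r' + 1 ≤ r by omega)) (not_le.2 (hr.trans_lt hr'_succ))

theorem Int.unbounded_of_apply_mul_eq {g : ℤ → ℤ} {N m : ℤ} (hm : 0 < m)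
    (hg : ∀ t, g (t * N) = g 0 + t * m) (x : ℤ) :
    (∃ r, g r ≤ x) ∧ ∃ r, x < g r := by
  have hd : |x - g 0| ≤ |x - g 0| * m := le_mul_of_one_le_right (abs_nonneg _) hm
  refine ⟨⟨-|x - g 0| * N, ?_⟩, ⟨(|x - g 0| + 1) * N, ?_⟩⟩
  · rw [hg]
    linarith [neg_abs_le (x - g 0)]
  · rw [hg]
    linarith [le_abs_self (x - g 0)]

theorem IsLP.apply_add_mul {K N : ℤ} {L : ℤ → ℤ} (hL : IsLP K N L) (z t : ℤ) :
    L (z + t * N) = L z - t * K := by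
  induction t using Int.induction_on with
  | zero => simp
  | succ k ih =>
    rw [show z + (k + 1) * N = z + k * N + N by ring, hL.2, ih]
    ring
  | pred k ih =>
    have h := hL.2 (z + (-k - 1) * N)
    rw [show z + (-k - 1) * N + N = z + -k * N by ring, ih] at h
    linarith

theorem monotone_LPshift_mul {a b : ℤ} {L : ℤ → ℤ} (hle : ∀ y, L y ≤ LPshift a b L y) (y : ℤ) :
    Monotone fun r => LPshift (r * a) (r * b) L y := by
  refine monotone_int_of_le_succ fun r => ?_
  have h := hle (y + r * b)
  simp only [LPshift] at h ⊢
  rw [show y + (r + 1) * b = y + r * b + b by ring]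
  linarith

theorem IsLP.LPshift_mul_period {K N a b : ℤ} {L : ℤ → ℤ} (hL : IsLP K N L) (y t : ℤ) :
    LPshift (t * N * a) (t * N * b) L y = L y + t * (a * N - b * K) := by
  simp only [LPshift]
  rw [show y + t * N * b = y + t * b * N by ring, hL.apply_add_mul]
  ring

theorem IsLP.mem_DeltaP_iff {K N a b : ℤ} {L : ℤ → ℤ} (hL : IsLP K N L) {x y x' y' s r : ℤ}
    (hx : x = x' + s * K + r * a) (hy : y = y' - s * N - r * b) :
    (x', y') ∈ DeltaP a b L ↔
      LPshift (r * a) (r * b) L y ≤ x ∧ x < LPshift ((r + 1) * a) ((r + 1) * b) L y := by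
  have hy' : y' = y + r * b + s * N := by rw [hy]; ring
  have hy'b : y' + b = y + (r + 1) * b + s * N := by rw [hy]; ring
  simp only [DeltaP, LPshift, Set.mem_ofPred_eq]
  rw [hy'b, hy', hL.apply_add_mul, hL.apply_add_mul, hx]
  constructor <;> rintro ⟨h₁, h₂⟩ <;> constructor <;> linarith

theorem unique_decomposition_into_Delta_general (K N a b : ℤ) (hN : 0 < N)
    (hm : 0 < a * N - b * K)
    (L : ℤ → ℤ) (hL : IsLP K N L) (hle : ∀ y : ℤ, L y ≤ LPshift a b L y)
    (x y : ℤ) :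
    ∃! q : ℤ × ℤ × ℤ × ℤ,
      (q.1, q.2.1) ∈ Delta N a b L ∧
      x = q.1 + q.2.2.1 * K + q.2.2.2 * a ∧
      y = q.2.1 - q.2.2.1 * N - q.2.2.2 * b := by
  have hunb := Int.unbounded_of_apply_mul_eq (g := fun r => LPshift (r * a) (r * b) L y) hm
    fun t => by simpa [LPshift] using hL.LPshift_mul_period y t
  obtain ⟨r, hr, hr_unique⟩ := (monotone_LPshift_mul hle y).existsUnique_le_lt_succ
    (fun x => (hunb x).1) (fun x => (hunb x).2) x
  obtain ⟨hdiv, hmod_nonneg, hmod_lt⟩ :=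
    (Int.ediv_emod_unique hN).1 (⟨rfl, rfl⟩ : (y + r * b) / N = _ ∧ (y + r * b) % N = _)
  set s := -((y + r * b) / N)
  have hx : x = (x - s * K - r * a) + s * K + r * a := by ring
  have hy : y = (y + r * b) % N - s * N - r * b := by linarith
  refine ⟨(x - s * K - r * a, (y + r * b) % N, s, r),
    ⟨⟨(hL.mem_DeltaP_iff hx hy).2 hr, hmod_nonneg, hmod_lt⟩, hx, hy⟩, ?_⟩
  rintro ⟨x', y', s', r'⟩ ⟨⟨hΔ', hy'_nonneg, hy'_lt⟩, hx', hy'⟩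
  obtain rfl : r' = r := hr_unique r' ((hL.mem_DeltaP_iff hx' hy').1 hΔ')
  obtain ⟨hs', rfl⟩ := (Int.ediv_emod_unique hN).2
    (⟨by linarith, hy'_nonneg, hy'_lt⟩ : y' + N * -s' = y + r' * b ∧ _)
  obtain rfl : s' = s := by omega
  simp only [Prod.mk.injEq, and_true]
  linarith

/-- For every `(x,y) ∈ ℤ²` there is a unique quadruple `(x', y', s, r)` with
`(x',y') ∈ Δ(L)` and `(x,y) = (x' + s*K + r*a, y' − s*N − r*b)`. -/
theorem unique_decomposition_into_Delta (K N a b : ℤ) (hK : 0 < K) (hN : 0 < N)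
    (hm : 0 < a * N - b * K)
    (L : ℤ → ℤ) (hL : IsLP K N L) (hle : ∀ y : ℤ, L y ≤ LPshift a b L y)
    (x y : ℤ) :
    ∃! q : ℤ × ℤ × ℤ × ℤ,
      (q.1, q.2.1) ∈ Delta N a b L ∧
      x = q.1 + q.2.2.1 * K + q.2.2.2 * a ∧
      y = q.2.1 - q.2.2.1 * N - q.2.2.2 * b :=
  unique_decomposition_into_Delta_general K N a b hN hm L hL hle x y
end

section
/- Fix integers K, N, a, b with m = a*N − b*K > 0. Let σ ∈ DPT(K,N,a,b), let r ∈ ℤ, and let (x,y), (x',y') ∈ ℤ². Then σ(x,y) = σ(x',y') + r*m if and only if there exists s ∈ ℤ such that (x, y) = (x' + s*K + r*a, y' − s*N − r*b). -/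
/-!
`σ` is invariant under translation by `(K, -N)` and grows by `m` under translation by `(a, -b)`,
so `σ mod m` descends to the quotient of `ℤ²` by the lattice `L` spanned by these two vectors.
That quotient has `|det| = m` elements and `σ` is surjective, so the induced map `ℤ² / L → ℤ / m`
is a bijection. Hence `σ p ≡ σ q [ZMOD m]` forces `p - q ∈ L`, and comparing the values of `σ`
then pins down the `(a, -b)`-coordinate of `p - q`.
-/

theorem apply_add_zsmul_of_apply_add {G H : Type*} [AddGroup G] [AddGroup H] {f : G → H}
    {u : G} {c : H} (h : ∀ p, f (p + u) = f p + c) (n : ℤ) (p : G) :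
    f (p + n • u) = f p + n • c := by
  induction n using Int.induction_on generalizing p with
  | zero => simp
  | succ n ih => rw [add_one_zsmul, ← add_assoc, h, ih, add_one_zsmul, add_assoc]
  | pred n ih =>
    have step := h (p + (-(n : ℤ) - 1) • u)
    rw [add_assoc, ← add_one_zsmul, sub_add_cancel, ih] at step
    rw [sub_one_zsmul c, ← add_assoc, step, add_neg_cancel_right]

noncomputable def periodMap (K N a b : ℤ) : ℤ × ℤ →ₗ[ℤ] ℤ × ℤ :=
  Matrix.toLin (Module.Basis.finTwoProd ℤ) (Module.Basis.finTwoProd ℤ) !![K, a; -N, -b]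

section periodMap

variable {K N a b : ℤ}

@[simp] theorem periodMap_apply (s t : ℤ) :
    periodMap K N a b (s, t) = s • (K, -N) + t • (a, -b) := by
  ext <;> simp [periodMap, Matrix.toLin_apply, Matrix.mulVec, dotProduct] <;> ring

theorem det_periodMap : LinearMap.det (periodMap K N a b) = a * N - b * K := by
  rw [periodMap, LinearMap.det_toLin, Matrix.det_fin_two_of]
  ring

theorem periodMap_injective (hm : a * N - b * K ≠ 0) :
    Function.Injective (periodMap K N a b) := by
  rw [← LinearMap.ker_eq_bot, LinearMap.ker_eq_bot']
  rintro ⟨s, t⟩ h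
  simp only [periodMap_apply, Prod.smul_mk, smul_eq_mul, Prod.mk_add_mk, Prod.mk_eq_zero] at h
  obtain ⟨h₁, h₂⟩ := h
  have hs : s * (a * N - b * K) = 0 := by linear_combination -b * h₁ - a * h₂
  have ht : t * (a * N - b * K) = 0 := by linear_combination N * h₁ + K * h₂
  simp [(mul_eq_zero.mp hs).resolve_right hm, (mul_eq_zero.mp ht).resolve_right hm]

theorem card_quotient_range_periodMap (hm : a * N - b * K ≠ 0) :
    Nat.card ((ℤ × ℤ) ⧸ LinearMap.range (periodMap K N a b)) = (a * N - b * K).natAbs := by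
  rw [← Submodule.natAbs_det_equiv _ (LinearEquiv.ofInjective _ (periodMap_injective hm)),
    ← det_periodMap]
  rfl

end periodMap

section periodic

variable {K N a b : ℤ} {σ : ℤ × ℤ → ℤ}
  (hK : ∀ x y : ℤ, σ (x + K, y - N) = σ (x, y))
  (ha : ∀ x y : ℤ, σ (x + a, y - b) = σ (x, y) + (a * N - b * K))
include hK ha

theorem apply_add_periodMap (p : ℤ × ℤ) (s t : ℤ) :
    σ (p + periodMap K N a b (s, t)) = σ p + t * (a * N - b * K) := by
  have hK' : ∀ p : ℤ × ℤ, σ (p + (K, -N)) = σ p + 0 := fun ⟨x, y⟩ => by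
    simpa [← sub_eq_add_neg] using hK x y
  have ha' : ∀ p : ℤ × ℤ, σ (p + (a, -b)) = σ p + (a * N - b * K) := fun ⟨x, y⟩ => by
    simpa [← sub_eq_add_neg] using ha x y
  rw [periodMap_apply, ← add_assoc, apply_add_zsmul_of_apply_add ha',
    apply_add_zsmul_of_apply_add hK', smul_zero, add_zero, smul_eq_mul]

theorem sub_mem_range_periodMap_of_dvd (hσ : Function.Surjective σ) (hm : a * N - b * K ≠ 0)
    {p q : ℤ × ℤ} (h : a * N - b * K ∣ σ p - σ q) :
    p - q ∈ LinearMap.range (periodMap K N a b) := by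
  set L := LinearMap.range (periodMap K N a b)
  set n := (a * N - b * K).natAbs
  have hmn : ((a * N - b * K : ℤ) : ZMod n) = 0 :=
    (ZMod.intCast_zmod_eq_zero_iff_dvd _ n).2 Int.natAbs_dvd_self
  let g : (ℤ × ℤ) ⧸ L → ZMod n := Quotient.lift (fun p => (σ p : ZMod n)) <| by
    rintro p q hpq
    obtain ⟨⟨s, t⟩, hst⟩ := (Submodule.quotientRel_def L).1 hpq
    rw [← sub_add_cancel p q, add_comm, ← hst, apply_add_periodMap hK ha,
      Int.cast_add, Int.cast_mul, hmn, mul_zero, add_zero]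
  have hg_surj : Function.Surjective g := fun z => by
    obtain ⟨w, rfl⟩ := ZMod.intCast_surjective z
    obtain ⟨p, rfl⟩ := hσ w
    exact ⟨Submodule.Quotient.mk p, rfl⟩
  have hcard := card_quotient_range_periodMap hm
  have : Finite ((ℤ × ℤ) ⧸ L) :=
    Nat.finite_of_card_ne_zero (by rw [hcard]; exact Int.natAbs_ne_zero.2 hm)
  have hg_inj := (hg_surj.bijective_of_nat_card_le (by rw [hcard, Nat.card_zmod])).injective
  rw [← Submodule.Quotient.eq]
  refine hg_inj ((ZMod.intCast_eq_intCast_iff_dvd_sub _ _ n).2 ?_)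
  exact Int.natAbs_dvd.2 (dvd_sub_comm.1 h)

theorem apply_eq_apply_add_mul_iff (hσ : Function.Surjective σ) (hm : a * N - b * K ≠ 0)
    (p q : ℤ × ℤ) (r : ℤ) :
    σ p = σ q + r * (a * N - b * K) ↔ ∃ s, p = q + periodMap K N a b (s, r) := by
  constructor
  · intro h
    have hdvd : a * N - b * K ∣ σ p - σ q := ⟨r, by rw [h]; ring⟩
    obtain ⟨⟨s, t⟩, hst⟩ := sub_mem_range_periodMap_of_dvd hK ha hσ hm hdvd
    have hp : p = q + periodMap K N a b (s, t) := by rw [hst, add_sub_cancel]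
    have htr : t = r := by
      rw [hp, apply_add_periodMap hK ha] at h
      exact mul_right_cancel₀ hm (add_left_cancel h)
    exact ⟨s, htr ▸ hp⟩
  · rintro ⟨s, rfl⟩
    exact apply_add_periodMap hK ha q s r

end periodic

/-- For `σ ∈ DPT(K,N,a,b)`: `σ(x,y) = σ(x',y') + r*m` iff
`(x,y) = (x' + s*K + r*a, y' − s*N − r*b)` for some `s ∈ ℤ`. -/
theorem dpt_value_shift_iff (K N a b : ℤ) (hm : 0 < a * N - b * K)
    (σ : ℤ × ℤ → ℤ) (hσ : IsDPT K N a b σ) (r x y x' y' : ℤ) :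
    σ (x, y) = σ (x', y') + r * (a * N - b * K) ↔
      ∃ s : ℤ, x = x' + s * K + r * a ∧ y = y' - s * N - r * b := by
  obtain ⟨hsurj, hK, ha, -, -⟩ := hσ
  rw [apply_eq_apply_add_mul_iff hK ha hsurj hm.ne']
  refine exists_congr fun s => ?_
  simp only [periodMap_apply, Prod.smul_mk, smul_eq_mul, Prod.mk_add_mk, Prod.mk.injEq]
  constructor <;> rintro ⟨hx, hy⟩ <;> constructor <;> linarith
end

section
/- Let K, N > 0 and a, b ∈ ℤ, and let 𝓛 be a (K,N)-periodic lattice path with 𝓛 ≤ 𝓛[a,b]. Then Δ(𝓛) is a finite set containing exactly a*N − b*K cells. -/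
/-!
Row `y` of `Δ(𝓛)` is the interval `[𝓛 y, 𝓛 (y + b) + a)`, of length `𝓛 (y + b) + a - 𝓛 y ≥ 0`.
Summing over `0 ≤ y < N`, the quasi-periodicity `𝓛 (y + N) = 𝓛 y - K` makes the sum of
`𝓛 (y + b)` over a window of `N` consecutive rows equal to the sum of `𝓛 y` minus `b * K`,
so the total is `a * N - b * K`.
-/

open Finset

theorem sum_Ico_comp_add_of_add_period {G : Type*} [AddCommGroup G] {f : ℤ → G} {N : ℤ}
    {K : G} (hN : 0 ≤ N) (hf : ∀ y, f (y + N) = f y - K) (c : ℤ) :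
    ∑ y ∈ Ico 0 N, f (y + c) = ∑ y ∈ Ico 0 N, f y - c • K := by
  set S : ℤ → G := fun c => ∑ y ∈ Ico 0 N, f (y + c)
  have step (c : ℤ) : S (c + 1) = S c - K := by
    have top : ∑ y ∈ Ico 0 (N + 1), f (y + c) = S c + f (N + c) := by
      rw [Ico_add_one_right_eq_Icc, ← Ico_insert_right hN, sum_insert right_notMem_Ico,
        add_comm]
    have bot : ∑ y ∈ Ico 0 (N + 1), f (y + c) = f c + S (c + 1) := by
      rw [← insert_Ico_add_one_left_eq_Ico (by omega : (0 : ℤ) < N + 1),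
        sum_insert (by simp), zero_add, ← sum_Ico_add']
      simp only [S, add_right_comm _ (1 : ℤ) c, add_assoc]
    rw [add_comm N c, hf c] at top
    exact add_left_cancel ((bot.symm.trans top).trans (by abel))
  have hS0 : S 0 = ∑ y ∈ Ico 0 N, f y := by simp [S]
  change S c = _
  rw [← hS0]
  induction c using Int.induction_on with
  | zero => simp
  | succ n ih => rw [step, ih, add_smul, one_smul, sub_sub]
  | pred n ih =>
    have h := step (-n - 1)
    rw [sub_add_cancel, ih, eq_sub_iff_add_eq, eq_comm] at h
    rw [h, sub_smul, one_smul]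
    abel

theorem cells_between_finite_and_ncard (s : Finset ℤ) (lo hi : ℤ → ℤ) (hlohi : ∀ y ∈ s, lo y ≤ hi y) :
    {p : ℤ × ℤ | p.2 ∈ s ∧ lo p.2 ≤ p.1 ∧ p.1 < hi p.2}.Finite ∧
      ({p : ℤ × ℤ | p.2 ∈ s ∧ lo p.2 ≤ p.1 ∧ p.1 < hi p.2}.ncard : ℤ) =
        ∑ y ∈ s, (hi y - lo y) := by
  have hcells : {p : ℤ × ℤ | p.2 ∈ s ∧ lo p.2 ≤ p.1 ∧ p.1 < hi p.2} =
      ↑(s.biUnion fun y => Ico (lo y) (hi y) ×ˢ {y}) := by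
    ext ⟨x, y⟩
    simp only [coe_biUnion, Set.mem_iUnion, mem_coe, mem_product, mem_Ico, mem_singleton,
      Set.mem_ofPred_eq, exists_prop, exists_eq_right_right']
  have hdisj : (s : Set ℤ).PairwiseDisjoint fun y => Ico (lo y) (hi y) ×ˢ {y} :=
    fun y _ y' _ hne => disjoint_product.2 (Or.inr (disjoint_singleton.2 hne))
  rw [hcells, Set.ncard_coe_finset, card_biUnion hdisj]
  refine ⟨finite_toSet _, ?_⟩
  push_cast
  refine sum_congr rfl fun y hy => ?_
  simp [Int.toNat_of_nonneg (sub_nonneg.2 (hlohi y hy))]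

theorem Delta_card_general (K N a b : ℤ) (hN : 0 < N)
    (L : ℤ → ℤ) (hL : IsLP K N L) (hle : ∀ y : ℤ, L y ≤ LPshift a b L y) :
    (Delta N a b L).Finite ∧ ((Delta N a b L).ncard : ℤ) = a * N - b * K := by
  have hDelta : Delta N a b L =
      {p : ℤ × ℤ | p.2 ∈ Ico 0 N ∧ L p.2 ≤ p.1 ∧ p.1 < LPshift a b L p.2} := by
    ext ⟨x, y⟩
    simp only [Delta, DeltaP, Set.mem_ofPred_eq, mem_Ico]
    tauto
  rw [hDelta]
  refine (cells_between_finite_and_ncard _ _ _ fun y _ => hle y).imp_right fun hcard => ?_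
  rw [hcard]
  simp only [LPshift]
  rw [sum_sub_distrib, sum_add_distrib, sum_Ico_comp_add_of_add_period hN.le hL.2]
  simp only [smul_eq_mul, sum_const, Int.card_Ico, sub_zero, nsmul_eq_mul, Int.ofNat_toNat,
    hN.le, sup_of_le_left]
  ring

/-- If `L ≤ L[a,b]`, then `Δ(L)` is finite with exactly `a*N − b*K` cells. -/
theorem Delta_card (K N a b : ℤ) (hK : 0 < K) (hN : 0 < N)
    (L : ℤ → ℤ) (hL : IsLP K N L) (hle : ∀ y : ℤ, L y ≤ LPshift a b L y) :
    (Delta N a b L).Finite ∧ ((Delta N a b L).ncard : ℤ) = a * N - b * K :=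
  Delta_card_general K N a b hN L hL hle
end

section
/- Let K, N > 0 and a, b ∈ ℤ with m = a*N − b*K > 0, and suppose a ≤ K and b ≥ N − 1. Let 𝓛 be a (K,N)-periodic lattice path with 𝓛 ≤ 𝓛[a,b]. Then every standard filling of Δ(𝓛) by the numbers 1,…,m extends to a standard filling of Δ'(𝓛), i.e. the (K,N)-periodic extension of any standard filling of Δ(𝓛) is standard on Δ'(𝓛). -/
/-- A standard filling of `Δ(L)` by the numbers `1, …, m`:
a bijection onto `{1,…,m}` strictly increasing between adjacent cells of `Δ(L)`. -/
def IsStdFilling (K N a b : ℤ) (L : ℤ → ℤ) (τ : ℤ × ℤ → ℤ) : Prop :=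
  Set.BijOn τ (Delta N a b L) (Set.Icc 1 (a * N - b * K)) ∧
  (∀ x y : ℤ, (x, y) ∈ Delta N a b L → (x + 1, y) ∈ Delta N a b L →
    τ (x, y) < τ (x + 1, y)) ∧
  (∀ x y : ℤ, (x, y) ∈ Delta N a b L → (x, y + 1) ∈ Delta N a b L →
    τ (x, y) < τ (x, y + 1))

/-- Standardness of the `(K,N)`-periodic extension of a filling `τ` of `Δ` to
`Δ' = ⋃ₛ (Δ + s(K,−N))`: whenever shifted copies of cells of `Δ` are
horizontally or vertically adjacent, the values of `τ` strictly increase. -/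
def ExtStandard (K N : ℤ) (Δ : Set (ℤ × ℤ)) (τ : ℤ × ℤ → ℤ) : Prop :=
  ∀ x y x' y' s s' : ℤ, (x, y) ∈ Δ → (x', y') ∈ Δ →
    ((x + s * K + 1 = x' + s' * K ∧ y - s * N = y' - s' * N) → τ (x, y) < τ (x', y')) ∧
    ((x + s * K = x' + s' * K ∧ y - s * N + 1 = y' - s' * N) → τ (x, y) < τ (x', y'))

/-- If `a ≤ K` and `b ≥ N − 1`, every standard filling of `Δ(L)` has standard
`(K,N)`-periodic extension to `Δ'(L)`. -/
theorem std_filling_extends (K N a b : ℤ) (hK : 0 < K) (hN : 0 < N)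
    (hm : 0 < a * N - b * K) (ha : a ≤ K) (hb : N - 1 ≤ b)
    (L : ℤ → ℤ) (hL : IsLP K N L) (hle : ∀ y : ℤ, L y ≤ LPshift a b L y)
    (τ : ℤ × ℤ → ℤ) (hτ : IsStdFilling K N a b L τ) :
    ExtStandard K N (Delta N a b L) τ := by
  obtain ⟨hanti, hper⟩ := hL
  obtain ⟨hbij, hH, hV⟩ := hτ
  intro x y x' y' s s' hxy hxy'
  have hm1 := hxy
  have hm2 := hxy'
  simp only [Delta, DeltaP, LPshift, Set.mem_setOf_eq] at hm1 hm2
  obtain ⟨⟨hl1, hr1⟩, hy0, hyN⟩ := hm1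
  obtain ⟨⟨hl2, hr2⟩, hy0', hyN'⟩ := hm2
  constructor
  · rintro ⟨h1, h2⟩
    have hd : (s - s') * N = y - y' := by linear_combination -h2
    have hss : s = s' := by
      rcases lt_trichotomy (s - s') 0 with h | h | h
      · have h1' : s - s' ≤ -1 := by omega
        have : (s - s') * N ≤ (-1) * N := by
          apply mul_le_mul_of_nonneg_right h1' (le_of_lt hN)
        omega
      · omega
      · have h1' : 1 ≤ s - s' := by omega
        have : 1 * N ≤ (s - s') * N := by
          apply mul_le_mul_of_nonneg_right h1' (le_of_lt hN)
        omega
    have hy : y' = y := by rw [hss] at hd; omega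
    have hx : x' = x + 1 := by rw [hss] at h1; omega
    rw [hy, hx] at hxy' ⊢
    exact hH x y hxy hxy'
  · rintro ⟨h1, h2⟩
    have hd : (s - s') * N = y + 1 - y' := by linear_combination -h2
    have hcases : s - s' = 0 ∨ s - s' = 1 := by
      rcases lt_trichotomy (s - s') 0 with h | h | h
      · have h1' : s - s' ≤ -1 := by omega
        have : (s - s') * N ≤ (-1) * N := by
          apply mul_le_mul_of_nonneg_right h1' (le_of_lt hN)
        omega
      · left; exact h
      · by_contra hc
        push_neg at hc
        have h1' : 2 ≤ s - s' := by omega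
        have : 2 * N ≤ (s - s') * N := by
          apply mul_le_mul_of_nonneg_right h1' (le_of_lt hN)
        omega
    rcases hcases with h | h
    · have hss : s = s' := by omega
      have hy : y' = y + 1 := by rw [hss] at hd; omega
      have hx : x' = x := by rw [hss] at h1; omega
      rw [hy, hx] at hxy' ⊢
      exact hV x y hxy hxy'
    · -- impossible case: y = N-1, y' = 0, x' = x + K
      exfalso
      have hy : y = N - 1 ∧ y' = 0 := by
        have := hd; rw [h, one_mul] at this; omega
      have hx : x' = x + K := by linear_combination K * h - h1
      have h5 : L b ≤ L (N - 1) := hanti hb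
      have h6 : L (N - 1) ≤ x := by rw [hy.1] at hl1; exact hl1
      have h7 : x' < L (y' + b) + a := hr2
      rw [hy.2, zero_add, hx] at h7
      linarith
end

section
/- Fix integers K, N, a, b with m = a*N − b*K > 0. For any σ₁, σ₂ ∈ DPT(K,N,a,b) there exists a unique m-affine permutation f : ℤ → ℤ such that σ₂(x,y) = f(σ₁(x,y)) for all (x,y) ∈ ℤ². -/
/-!
The lattice `L ⊆ ℤ²` spanned by `(K, -N)` and `(a, -b)` has index `|det| = m`. A standard
tableau `σ`, reduced mod `m`, is `L`-invariant and onto `ℤ/m`, so it induces a bijection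
`ℤ² ⧸ L ≃ ℤ/m`. Hence `σ p = σ q` forces `q - p = s (K, -N) + t (a, -b)` with `t m = 0`: the fibres
of every standard tableau are exactly the `(K, -N)`-orbits. Two tableaux thus have the same
fibres, and `σ₂ ∘ σ₁⁻¹` is a well-defined bijection commuting with `· + m`.
-/

open Module Submodule Function

theorem map_add_zsmul_of_map_add {G H : Type*} [AddGroup G] [AddGroup H] {σ : G → H} {w : G}
    {c : H} (hw : ∀ p, σ (p + w) = σ p + c) (t : ℤ) (p : G) : σ (p + t • w) = σ p + t • c := by
  induction t using Int.induction_on with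
  | zero => simp
  | succ n ih => rw [add_one_zsmul, ← add_assoc, hw, ih, add_one_zsmul, add_assoc]
  | pred n ih =>
    have := hw (p + (-n - 1 : ℤ) • w)
    rw [add_assoc, ← add_one_zsmul, sub_add_cancel, ih] at this
    rw [eq_sub_of_add_eq this.symm, sub_one_zsmul, add_sub_assoc, sub_eq_add_neg]

theorem linearIndependent_pair_of_cross_ne_zero {u v : ℤ × ℤ} (h : u.1 * v.2 - v.1 * u.2 ≠ 0) :
    LinearIndependent ℤ ![u, v] := by
  refine LinearIndependent.pair_iff.mpr fun s t hst ↦ ?_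
  have h₁ : s * u.1 + t * v.1 = 0 := congrArg Prod.fst hst
  have h₂ : s * u.2 + t * v.2 = 0 := congrArg Prod.snd hst
  have hs : s * (u.1 * v.2 - v.1 * u.2) = 0 := by linear_combination v.2 * h₁ - v.1 * h₂
  have ht : t * (u.1 * v.2 - v.1 * u.2) = 0 := by linear_combination u.1 * h₂ - u.2 * h₁
  exact ⟨(mul_eq_zero.mp hs).resolve_right h, (mul_eq_zero.mp ht).resolve_right h⟩

theorem card_quotient_span_pair {u v : ℤ × ℤ} (h : u.1 * v.2 - v.1 * u.2 ≠ 0) :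
    Nat.card ((ℤ × ℤ) ⧸ span ℤ {u, v}) = (u.1 * v.2 - v.1 * u.2).natAbs := by
  rw [← Matrix.range_cons_cons_empty u v ![], ← Submodule.natAbs_det_basis_change
    (Basis.finTwoProd ℤ) _ (Basis.span (linearIndependent_pair_of_cross_ne_zero h))]
  congr 1
  rw [Basis.det_apply, Matrix.det_fin_two]
  simp [Basis.toMatrix_apply, Basis.span_apply, Basis.coe_finTwoProd_repr]

section QuasiPeriodic

variable {G : Type*} [AddCommGroup G] {σ : G → ℤ} {v w : G} {m : ℤ}

theorem map_add_zsmul_add_zsmul (hv : ∀ p, σ (p + v) = σ p) (hw : ∀ p, σ (p + w) = σ p + m)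
    (s t : ℤ) (p : G) : σ (p + s • v + t • w) = σ p + t * m := by
  have hv' : ∀ p, σ (p + v) = σ p + 0 := by simpa using hv
  rw [map_add_zsmul_of_map_add hw, map_add_zsmul_of_map_add hv', zsmul_zero, add_zero,
    smul_eq_mul]

theorem exists_eq_add_zsmul_add_zsmul_of_map_eq (hm : m ≠ 0) (hσ : Surjective σ)
    (hv : ∀ p, σ (p + v) = σ p) (hw : ∀ p, σ (p + w) = σ p + m)
    (hcard : Nat.card (G ⧸ span ℤ {v, w}) = m.natAbs) {p q : G} (hpq : σ p = σ q) :
    ∃ s t : ℤ, q = p + s • v + t • w := by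
  have : NeZero m.natAbs := ⟨Int.natAbs_ne_zero.mpr hm⟩
  have : Finite (G ⧸ span ℤ {v, w}) := Nat.finite_of_card_ne_zero (hcard ▸ NeZero.ne _)
  have mem_span_iff (p q : G) : q - p ∈ span ℤ {v, w} ↔ ∃ s t : ℤ, q = p + s • v + t • w := by
    rw [mem_span_pair]
    exact exists₂_congr fun s t ↦ by rw [add_assoc, eq_comm, sub_eq_iff_eq_add']
  set φ := extend (Submodule.Quotient.mk (p := span ℤ {v, w})) (fun p ↦ (σ p : ZMod m.natAbs))
    (fun _ ↦ 0)
  have hφ : ∀ p, φ (Submodule.Quotient.mk p) = σ p := by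
    refine FactorsThrough.extend_apply (fun p q hpq ↦ ?_) _
    obtain ⟨s, t, rfl⟩ := (mem_span_iff p q).mp ((Submodule.Quotient.eq _).mp hpq.symm)
    rw [map_add_zsmul_add_zsmul hv hw, Int.cast_add, Int.cast_mul,
      (ZMod.intCast_zmod_eq_zero_iff_dvd _ _).mpr (Int.natAbs_dvd.mpr dvd_rfl), mul_zero, add_zero]
  have hφ_bij : Bijective φ := by
    refine Surjective.bijective_of_nat_card_le (fun z ↦ ?_) (by simp [hcard])
    obtain ⟨p, hp⟩ := hσ z.val
    exact ⟨Submodule.Quotient.mk p, by simp [hφ, hp]⟩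
  refine (mem_span_iff p q).mp ((Submodule.Quotient.eq _).mp (hφ_bij.injective ?_))
  rw [hφ, hφ, hpq]

theorem map_eq_map_iff_exists_zsmul (hm : m ≠ 0) (hσ : Surjective σ)
    (hv : ∀ p, σ (p + v) = σ p) (hw : ∀ p, σ (p + w) = σ p + m)
    (hcard : Nat.card (G ⧸ span ℤ {v, w}) = m.natAbs) {p q : G} :
    σ p = σ q ↔ ∃ s : ℤ, q = p + s • v := by
  constructor
  · intro hpq
    obtain ⟨s, t, rfl⟩ := exists_eq_add_zsmul_add_zsmul_of_map_eq hm hσ hv hw hcard hpq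
    have ht : t * m = 0 := by linarith [map_add_zsmul_add_zsmul hv hw s t p]
    rw [(mul_eq_zero.mp ht).resolve_right hm, zero_smul, add_zero]
    exact ⟨s, rfl⟩
  · rintro ⟨s, rfl⟩
    simpa using (map_add_zsmul_add_zsmul hv hw s 0 p).symm

end QuasiPeriodic

theorem existsUnique_bijective_comp_eq {X α : Type*} [Add α] {σ₁ σ₂ : X → α} {T : X → X} {m : α}
    (h₁ : Surjective σ₁) (h₂ : Surjective σ₂) (hfib : ∀ p q, σ₁ p = σ₁ q ↔ σ₂ p = σ₂ q)
    (hT₁ : ∀ p, σ₁ (T p) = σ₁ p + m) (hT₂ : ∀ p, σ₂ (T p) = σ₂ p + m) :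
    ∃! f : α → α, Bijective f ∧ (∀ i, f (i + m) = f i + m) ∧ ∀ p, σ₂ p = f (σ₁ p) := by
  set f := extend σ₁ σ₂ id
  have hf (p : X) : f (σ₁ p) = σ₂ p := FactorsThrough.extend_apply (fun p q ↦ (hfib p q).mp) _ p
  refine ⟨f, ⟨⟨?_, fun j ↦ ?_⟩, ?_, fun p ↦ (hf p).symm⟩, fun g ⟨_, _, hg⟩ ↦ ?_⟩
  · exact h₁.forall₂.mpr fun p q hpq ↦ (hfib p q).mpr (by rwa [hf, hf] at hpq)
  · obtain ⟨p, rfl⟩ := h₂ j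
    exact ⟨σ₁ p, hf p⟩
  · exact h₁.forall.mpr fun p ↦ by rw [← hT₁, hf, hf, hT₂]
  · exact funext (h₁.forall.mpr fun p ↦ by rw [← hg, hf])

namespace IsDPT

variable {K N a b : ℤ} {σ : ℤ × ℤ → ℤ}

theorem map_add_period (hσ : IsDPT K N a b σ) (p : ℤ × ℤ) : σ (p + (K, -N)) = σ p := by
  rw [Prod.add_def, ← sub_eq_add_neg]
  exact hσ.2.1 p.1 p.2

theorem map_add_quasiPeriod (hσ : IsDPT K N a b σ) (p : ℤ × ℤ) :
    σ (p + (a, -b)) = σ p + (a * N - b * K) := by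
  rw [Prod.add_def, ← sub_eq_add_neg]
  exact hσ.2.2.1 p.1 p.2

theorem map_eq_map_iff (hσ : IsDPT K N a b σ) (hm : a * N - b * K ≠ 0) {p q : ℤ × ℤ} :
    σ p = σ q ↔ ∃ s : ℤ, q = p + s • (K, -N) := by
  have hcross : K * -b - a * -N = a * N - b * K := by ring
  refine map_eq_map_iff_exists_zsmul hm hσ.1 hσ.map_add_period hσ.map_add_quasiPeriod ?_
  rw [card_quotient_span_pair (u := (K, -N)) (v := (a, -b)) (hcross ▸ hm)]
  exact congrArg Int.natAbs hcross

end IsDPT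

/-- For any `σ₁, σ₂ ∈ DPT(K,N,a,b)` there is a unique `m`-affine permutation `f`
(a bijection `ℤ → ℤ` with `f(i+m) = f(i)+m`) with `σ₂ = f ∘ σ₁`. -/
theorem dpt_transitive_affine_perm (K N a b : ℤ) (hm : 0 < a * N - b * K)
    (σ₁ σ₂ : ℤ × ℤ → ℤ) (h₁ : IsDPT K N a b σ₁) (h₂ : IsDPT K N a b σ₂) :
    ∃! f : ℤ → ℤ, Function.Bijective f ∧
      (∀ i : ℤ, f (i + (a * N - b * K)) = f i + (a * N - b * K)) ∧
      ∀ x y : ℤ, σ₂ (x, y) = f (σ₁ (x, y)) := by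
  simpa only [Prod.forall] using existsUnique_bijective_comp_eq h₁.1 h₂.1
    (fun p q ↦ (h₁.map_eq_map_iff hm.ne').trans (h₂.map_eq_map_iff hm.ne').symm)
    h₁.map_add_quasiPeriod h₂.map_add_quasiPeriod
end

section
/- Fix integers K, N, a, b with m = a*N − b*K > 0 (so K, N > 0 whenever DPT(K,N,a,b) is nonempty; assume K, N > 0). Let σ ∈ DPT(K,N,a,b) and i ∈ ℤ. If σ(x,y) = i and σ(x',y') = i+1, then (x − y) − (x' − y') is not divisible by N + K; in particular the contents of the cells labeled i and i+1 are distinct modulo N + K. -/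
section StandardFilling

variable {σ : ℤ × ℤ → ℤ}

lemma add_two_mul_le_of_diagonal (hx : ∀ x y, σ (x, y) < σ (x + 1, y))
    (hy : ∀ x y, σ (x, y) < σ (x, y + 1)) (u v : ℤ) {d : ℤ} (hd : 0 ≤ d) :
    σ (u, v) + 2 * d ≤ σ (u + d, v + d) := by
  induction d, hd using Int.leInduction with
  | base => simp
  | succ d _ ih =>
    have hup := hy (u + d) (v + d)
    have hright := hx (u + d) (v + d + 1)
    rw [← add_assoc, ← add_assoc]
    omega

lemma two_mul_abs_le_abs_sub_of_diagonal (hx : ∀ x y, σ (x, y) < σ (x + 1, y))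
    (hy : ∀ x y, σ (x, y) < σ (x, y + 1)) {u v u' v' : ℤ} (h : u - v = u' - v') :
    2 * |u' - u| ≤ |σ (u', v') - σ (u, v)| := by
  rcases le_total u u' with hle | hle
  · have := add_two_mul_le_of_diagonal hx hy u v (sub_nonneg.2 hle)
    rw [add_sub_cancel, show v + (u' - u) = v' by omega] at this
    rw [abs_of_nonneg (sub_nonneg.2 hle)]
    exact (by omega : 2 * (u' - u) ≤ σ (u', v') - σ (u, v)).trans (le_abs_self _)
  · have := add_two_mul_le_of_diagonal hx hy u' v' (sub_nonneg.2 hle)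
    rw [add_sub_cancel, show v' + (u - u') = v by omega] at this
    rw [abs_sub_comm, abs_sub_comm (σ _), abs_of_nonneg (sub_nonneg.2 hle)]
    exact (by omega : 2 * (u - u') ≤ σ (u, v) - σ (u', v')).trans (le_abs_self _)

end StandardFilling

theorem content_of_consecutive_labels_general (K N a b : ℤ)
    (σ : ℤ × ℤ → ℤ) (hσ : IsDPT K N a b σ) (i x y x' y' : ℤ)
    (h1 : σ (x, y) = i) (h2 : σ (x', y') = i + 1) :
    ¬ ((N + K) ∣ ((x - y) - (x' - y'))) := by
  obtain ⟨-, hper, -, hx, hy⟩ := hσ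
  rintro ⟨t, ht⟩
  have hperiodic : Function.Periodic σ (K, -N) := fun ⟨u, v⟩ => by
    simpa [sub_eq_add_neg] using hper u v
  have hshift : σ (x' + t * K, y' - t * N) = i + 1 := by
    simpa [sub_eq_add_neg] using (hperiodic.zsmul t (x', y')).trans h2
  have hsame_diagonal : x - y = (x' + t * K) - (y' - t * N) := by linarith
  have hlabels := two_mul_abs_le_abs_sub_of_diagonal hx hy hsame_diagonal
  rw [hshift, h1, add_sub_cancel_left, abs_one] at hlabels
  have hcell : x' + t * K = x := by
    have := abs_nonneg (x' + t * K - x)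
    rw [← sub_eq_zero, ← abs_eq_zero]
    omega
  rw [hcell, show y' - t * N = y by omega, h1] at hshift
  omega

/-- If `σ(x,y) = i` and `σ(x',y') = i+1` in a standard doubly periodic tableau,
then `(x − y) − (x' − y')` is not divisible by `N + K`: the contents of the cells
labeled `i` and `i+1` differ modulo `N + K`. -/
theorem content_of_consecutive_labels (K N a b : ℤ) (hK : 0 < K) (hN : 0 < N)
    (hm : 0 < a * N - b * K)
    (σ : ℤ × ℤ → ℤ) (hσ : IsDPT K N a b σ) (i x y x' y' : ℤ)
    (h1 : σ (x, y) = i) (h2 : σ (x', y') = i + 1) :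
    ¬ ((N + K) ∣ ((x - y) - (x' - y'))) :=
  content_of_consecutive_labels_general K N a b σ hσ i x y x' y' h1 h2
end

section
/- Let m be a positive integer, A a positive integer, B ∈ ℤ/Aℤ, and C : ℤ → ℤ/Aℤ a function satisfying: (1) C(i+m) = C(i) + B for all i ∈ ℤ; (2) for every r ∈ ℤ/Aℤ and all i < j with C(i) = C(j) = r and no integer k with i < k < j and C(k) = r, there exists a unique integer p₊ with i < p₊ < j and C(p₊) = r + 1, and a unique integer p₋ with i < p₋ < j and C(p₋) = r − 1. Then there exist integers K, N > 0 and a, b ∈ ℤ with N + K = A, the class of a + b in ℤ/Aℤ equal to B, a*N − b*K = m, and a standard doubly periodic tableau σ ∈ DPT(K,N,a,b) such that C = C_σ. -/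
open Function

theorem Int.eq_add_of_add_one {k : ℤ → ℤ} (h : ∀ n, k (n + 1) = k n + 1) (n : ℤ) :
    k n = n + k 0 := by
  have hper : Periodic (fun n => k n - n) 1 := fun n => by beta_reduce; rw [h]; ring
  have := hper.int_mul_eq n
  simp only [Int.cast_id, mul_one, sub_zero] at this
  linarith

theorem StrictMono.exists_add_eq_of_range_eq {f g : ℤ → ℤ} (hf : StrictMono f)
    (hg : StrictMono g) (h : Set.range f = Set.range g) : ∃ t, ∀ n, f (n + t) = g n := by
  let φ : ℤ ≃o ℤ :=
    (hg.orderIso g).trans ((OrderIso.setCongr _ _ h.symm).trans (hf.orderIso f).symm)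
  refine ⟨φ 0, fun n => ?_⟩
  rw [← Int.eq_add_of_add_one fun n => by simpa using φ.map_succ n]
  exact congrArg Subtype.val ((hf.orderIso f).apply_symm_apply _)

theorem StrictMono.notMem_range_of_lt_of_lt {e : ℤ → ℤ} (he : StrictMono e) {n k : ℤ}
    (h₁ : e n < k) (h₂ : k < e (n + 1)) : k ∉ Set.range e := by
  rintro ⟨j, rfl⟩
  have := he.lt_iff_lt.1 h₁
  have := he.lt_iff_lt.1 h₂
  omega

theorem exists_strictMono_range_eq (S : Set ℤ) (hup : ∀ i, ∃ j ∈ S, i < j)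
    (hdn : ∀ i, ∃ j ∈ S, j < i) : ∃ e : ℤ → ℤ, StrictMono e ∧ Set.range e = S := by
  classical
  let := LinearLocallyFiniteOrder.succOrder S
  let := LinearLocallyFiniteOrder.predOrder S
  have : NoMaxOrder S := ⟨fun ⟨i, _⟩ => let ⟨j, hj, hij⟩ := hup i; ⟨⟨j, hj⟩, hij⟩⟩
  have : NoMinOrder S := ⟨fun ⟨i, _⟩ => let ⟨j, hj, hij⟩ := hdn i; ⟨⟨j, hj⟩, hij⟩⟩
  have : Nonempty S := let ⟨j, hj, _⟩ := hup 0; ⟨⟨j, hj⟩⟩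
  let f := (orderIsoIntOfLinearSuccPredArch (ι := S)).symm
  refine ⟨fun n => f n, fun a b h => f.strictMono h, ?_⟩
  rw [Set.range_comp' Subtype.val f, f.range_eq, Set.image_univ, Subtype.range_coe]

theorem Function.Periodic.exists_strictMono_range_eq_preimage {α : Type*} {f : ℤ → α} {L : ℤ}
    (hf : Periodic f L) (hL : 0 < L) {r : α} (hr : r ∈ Set.range f) :
    ∃ e : ℤ → ℤ, StrictMono e ∧ Set.range e = f ⁻¹' {r} := by
  obtain ⟨j, rfl⟩ := hr
  refine exists_strictMono_range_eq _ (fun i => ?_) (fun i => ?_)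
  · obtain ⟨k, hk, hjk⟩ := hf.exists_mem_Ico hL j (i + 1)
    exact ⟨k, hjk.symm, by linarith [hk.1]⟩
  · obtain ⟨k, hk, hjk⟩ := hf.exists_mem_Ico hL j (i - L)
    exact ⟨k, hjk.symm, by linarith [hk.2]⟩

def Interlaces (e f : ℤ → ℤ) (s : ℤ) : Prop :=
  ∀ n, e n < f (n + s) ∧ f (n + s) < e (n + 1)

section Interlaces

variable {e f : ℤ → ℤ} {s s' : ℤ}

theorem Interlaces.shift_eq (hf : StrictMono f) (h : Interlaces e f s)
    (h' : Interlaces e f s') : s = s' := by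
  by_contra hne
  wlog hlt : s < s' generalizing s s'
  · exact this h' h (Ne.symm hne) (by omega)
  have h₁ : f (1 + s) ≤ f s' := hf.monotone (by omega)
  have h₂ : e 1 < f (1 + s) := (h 1).1
  have h₃ : f s' < e 1 := by simpa using (h' 0).2
  omega

theorem Interlaces.comp_add (h : Interlaces e f s) (a b : ℤ) :
    Interlaces (fun n => e (n + a)) (fun n => f (n + b)) (s + a - b) := fun n => by
  simpa [show n + (s + a - b) + b = n + a + s by ring, add_right_comm n a 1] using h (n + a)

theorem Interlaces.add_const (h : Interlaces e f s) (c : ℤ) :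
    Interlaces (fun n => e n + c) (fun n => f n + c) s :=
  fun n => ⟨by linarith [(h n).1], by linarith [(h n).2]⟩

theorem exists_interlaces (hf : StrictMono f) (hdisj : ∀ n k, f k ≠ e n)
    (h : ∀ n, ∃! p, e n < p ∧ p < e (n + 1) ∧ p ∈ Set.range f) : ∃ s, Interlaces e f s := by
  have hex : ∀ n, ∃ j, e n < f j ∧ f j < e (n + 1) := fun n => by
    obtain ⟨_, ⟨h₁, h₂, j, rfl⟩, -⟩ := h n
    exact ⟨j, h₁, h₂⟩
  choose k hk using hex
  have hunique : ∀ n j, e n < f j → f j < e (n + 1) → j = k n := fun n j h₁ h₂ =>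
    hf.injective ((h n).unique ⟨h₁, h₂, j, rfl⟩ ⟨(hk n).1, (hk n).2, k n, rfl⟩)
  suffices hstep : ∀ n, k (n + 1) = k n + 1 from
    ⟨k 0, fun n => Int.eq_add_of_add_one hstep n ▸ hk n⟩
  intro n
  have hlt : k n < k (n + 1) := hf.lt_iff_lt.1 ((hk n).2.trans (hk (n + 1)).1)
  have hnext : e (n + 1) < f (k n + 1) := by
    rcases lt_trichotomy (f (k n + 1)) (e (n + 1)) with h' | h' | h'
    · have := hunique n _ ((hk n).1.trans (hf (lt_add_one _))) h'
      omega
    · exact absurd h' (hdisj _ _)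
    · exact h'
  by_contra hne
  have := hunique (n + 1) (k n + 1) hnext
    ((hf (show k n + 1 < k (n + 1) by omega)).trans (hk (n + 1)).2)
  omega

end Interlaces

theorem Int.exists_add_one_eq_add (s : ℤ → ℤ) : ∃ u : ℤ → ℤ, ∀ d, u (d + 1) = u d + s d := by
  refine ⟨fun d => ∑ i ∈ Finset.Ico 0 d, s i - ∑ i ∈ Finset.Ico d 0, s i, fun d => ?_⟩
  beta_reduce
  rcases le_or_gt 0 d with hd | hd
  · rw [← Finset.sum_Ico_add_eq_sum_Ico_add_one hd, Finset.Ico_eq_empty_of_le hd,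
      Finset.Ico_eq_empty_of_le (show (0 : ℤ) ≤ d + 1 by omega)]
    ring
  · rw [← Finset.insert_Ico_add_one_left_eq_Ico hd, Finset.sum_insert (by simp),
      Finset.Ico_eq_empty_of_le hd.le, Finset.Ico_eq_empty_of_le (show d + 1 ≤ 0 by omega)]
    ring

theorem exists_reindex_interlaces {f : ℤ → ℤ → ℤ} {s : ℤ → ℤ}
    (h : ∀ d, Interlaces (f d) (f (d + 1)) (s d)) : ∃ u : ℤ → ℤ,
      ∀ d, Interlaces (fun n => f d (n + u d)) (fun n => f (d + 1) (n + u (d + 1))) 0 := by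
  obtain ⟨u, hu⟩ := Int.exists_add_one_eq_add s
  refine ⟨u, fun d => ?_⟩
  have := (h d).comp_add (u d) (u (d + 1))
  rwa [hu, show s d + u d - (u d + s d) = 0 by ring, ← hu] at this

open Finset in
theorem Function.Periodic.card_filter_Ico_eq {p : ℤ → Prop} [DecidablePred p] {L : ℤ}
    (hp : Periodic p L) (hL : 0 < L) (x y : ℤ) :
    #{i ∈ Ico x (x + L) | p i} = #{i ∈ Ico y (y + L) | p i} := by
  have hmod : ∀ z i, p (toIcoMod hL z i) ↔ p i := fun z i => by
    rw [toIcoMod, hp.sub_zsmul_eq]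
  have hmaps : ∀ z w, Set.MapsTo (toIcoMod hL z) (({i ∈ Ico w (w + L) | p i} : Finset ℤ) : Set ℤ)
      ({i ∈ Ico z (z + L) | p i} : Finset ℤ) := fun z w i hi => by
    rw [mem_coe, mem_filter] at hi ⊢
    exact ⟨by simpa using toIcoMod_mem_Ico hL z i, (hmod z i).2 hi.2⟩
  have hinv : ∀ z w, Set.LeftInvOn (toIcoMod hL w) (toIcoMod hL z)
      (({i ∈ Ico w (w + L) | p i} : Finset ℤ) : Set ℤ) :=
    fun z w i hi => by
      rw [mem_coe, mem_filter] at hi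
      rw [toIcoMod_toIcoMod, toIcoMod_eq_self]
      simpa using hi.1
  exact card_nbij' _ _ (hmaps y x) (hmaps x y) (hinv y x) (hinv x y)

open Finset in
theorem StrictMono.card_filter_Ico_eq {e : ℤ → ℤ} (he : StrictMono e) {p : ℤ → Prop}
    [DecidablePred p] (hp : ∀ i, p i ↔ i ∈ Set.range e) {a b : ℤ} (hab : a ≤ b) :
    (#{i ∈ Ico (e a) (e b) | p i} : ℤ) = b - a := by
  have : {i ∈ Ico (e a) (e b) | p i} = (Ico a b).image e := by
    ext i
    simp only [mem_filter, mem_Ico, hp, mem_image]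
    constructor
    · rintro ⟨⟨h₁, h₂⟩, n, rfl⟩
      exact ⟨n, ⟨he.le_iff_le.1 h₁, he.lt_iff_lt.1 h₂⟩, rfl⟩
    · rintro ⟨n, ⟨h₁, h₂⟩, rfl⟩
      exact ⟨⟨he.monotone h₁, he h₂⟩, n, rfl⟩
  rw [this, card_image_of_injective _ he.injective, Int.card_Ico]
  omega

open Finset in
theorem card_mul_eq_of_fiber_shift {α : Type*} [Fintype α] [DecidableEq α] (C : ℤ → α)
    {e : α → ℤ → ℤ} (hmono : ∀ r, StrictMono (e r)) (hrange : ∀ r, Set.range (e r) = C ⁻¹' {r})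
    {μ L : ℤ} (hL : 0 < L) (hshift : ∀ r n, e r (n + μ) = e r n + L) :
    Fintype.card α * μ = L := by
  have hmem : ∀ r i, C i = r ↔ i ∈ Set.range (e r) := by simp [hrange]
  have hper : Periodic C L := fun i => by
    obtain ⟨n, hn⟩ := (hmem (C i) i).1 rfl
    exact (hmem _ _).2 ⟨n + μ, by rw [hshift, hn]⟩
  have hcount : ∀ r, (#{i ∈ Ico 0 L | C i = r} : ℤ) = μ := fun r => by
    have hend : e r μ = e r 0 + L := by simpa using hshift r 0
    have hμ : 0 ≤ μ := (hmono r).le_iff_le.1 (by linarith)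
    have hwindow := (show Periodic (C · = r) L from fun i => congrArg (· = r) (hper i))
      |>.card_filter_Ico_eq hL 0 (e r 0)
    rw [zero_add] at hwindow
    rw [hwindow, ← hend]
    simpa using (hmono r).card_filter_Ico_eq (hmem r) hμ
  calc (Fintype.card α : ℤ) * μ = ∑ r : α, (#{i ∈ Ico 0 L | C i = r} : ℤ) := by simp [hcount]
    _ = #(Ico 0 L) := by
      rw [card_eq_sum_card_fiberwise (f := C) fun _ _ => mem_univ _]
      push_cast
      rfl
    _ = L := by rw [Int.card_Ico]; omega

section Diagonals

variable {E : ℤ → ℤ → ℤ}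

theorem exists_diagonal_shift (hmono : ∀ d, StrictMono (E d))
    (hint : ∀ d, Interlaces (E d) (E (d + 1)) 0) {p c : ℤ}
    (hrange : ∀ d i, i ∈ Set.range (E (d + p)) ↔ i - c ∈ Set.range (E d)) :
    ∃ q, ∀ d n, E (d + p) (n - q) = E d n + c := by
  have hex : ∀ d, ∃ t, ∀ n, E (d + p) (n + t) = E d n + c := fun d =>
    (hmono (d + p)).exists_add_eq_of_range_eq ((hmono d).add_const c)
      (Set.ext fun i => by simp [hrange, eq_sub_iff_add_eq])
  choose t ht using hex
  have hconst : ∀ d, t (d + 1) = t d := fun d => by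
    -- Reindexing `hint (d + p)` by `t` and translating `hint d` by `c` give two interlacing
    -- shifts of the same pair of sequences: `t d - t (d + 1)` and `0`.
    have h₁ := (hint (d + p)).comp_add (t d) (t (d + 1))
    rw [add_right_comm] at h₁
    simp only [ht] at h₁
    linarith [((hint d).add_const c).shift_eq ((hmono (d + 1)).add_const c) h₁]
  refine ⟨-t 0, fun d n => ?_⟩
  have : t d = t 0 := by simpa using (show Periodic t 1 from hconst).int_mul_eq d
  rw [sub_neg_eq_add, ← this, ht]

theorem isDPT_of_diagonals {K N a b : ℤ} (hint : ∀ d, Interlaces (E d) (E (d + 1)) 0)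
    (hper : ∀ d n, E (d + (K + N)) (n - N) = E d n)
    (hshift : ∀ d n, E (d + (a + b)) (n - b) = E d n + (a * N - b * K))
    (hcover : ∀ i, ∃ d n, E d n = i) : IsDPT K N a b (fun q => E (q.1 - q.2) q.2) := by
  refine ⟨fun i => ?_, fun x y => ?_, fun x y => ?_, fun x y => ?_, fun x y => ?_⟩
  · obtain ⟨d, n, rfl⟩ := hcover i
    exact ⟨(d + n, n), by simp⟩
  · simpa [show x + K - (y - N) = x - y + (K + N) by ring] using hper (x - y) y
  · simpa [show x + a - (y - b) = x - y + (a + b) by ring] using hshift (x - y) y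
  · simpa [show x + 1 - y = x - y + 1 by ring] using (hint (x - y) y).1
  · simpa [show x - (y + 1) + 1 = x - y by ring] using (hint (x - (y + 1)) y).2

theorem apply_add_mul_sub_mul_eq {A N β b m : ℤ}
    (hN : ∀ d n, E (d + A) (n - N) = E d n) (hb : ∀ d n, E (d + β) (n - b) = E d n + m)
    (d n : ℤ) : E d (n + (β * N - A * b)) = E d n + A * m := by
  let Φ₁ : AddConstMap (ℤ × ℤ) ℤ (A, -N) 0 :=
    ⟨fun q => E q.1 q.2, fun q => by simpa [sub_eq_add_neg] using hN q.1 q.2⟩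
  let Φ₂ : AddConstMap (ℤ × ℤ) ℤ (β, -b) m :=
    ⟨fun q => E q.1 q.2, fun q => by simpa [sub_eq_add_neg] using hb q.1 q.2⟩
  have hsum : (d, n + (β * N - A * b)) + β • (A, -N) = (d, n) + A • (β, -b) := by
    ext <;> simp <;> ring
  calc E d (n + (β * N - A * b)) = Φ₁ ((d, n + (β * N - A * b)) + β • (A, -N)) := by
        rw [AddConstMapClass.map_add_zsmul, smul_zero, add_zero]; rfl
    _ = Φ₂ ((d, n) + A • (β, -b)) := congrArg (fun q => E q.1 q.2) hsum
    _ = E d n + A * m := by rw [AddConstMapClass.map_add_zsmul, smul_eq_mul]; rfl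

end Diagonals

theorem IsDPT.pos {K N a b : ℤ} {σ : ℤ × ℤ → ℤ} (hσ : IsDPT K N a b σ) (hKN : 0 < K + N) :
    0 < K ∧ 0 < N := by
  obtain ⟨-, hper, -, hrow, hcol⟩ := hσ
  have hrow' : StrictMono fun x => σ (x, -N) := strictMono_int_of_lt_succ fun x => hrow x (-N)
  have hcol' : StrictMono fun y => σ (0, y) := strictMono_int_of_lt_succ fun y => hcol 0 y
  have hσ₀ : σ (K, -N) = σ (0, 0) := by simpa using hper 0 0
  constructor
  · by_contra hK
    have h₁ : σ (K, -N) ≤ σ (0, -N) := hrow'.monotone (by omega)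
    have h₂ : σ (0, -N) < σ (0, 0) := hcol' (by omega)
    omega
  · by_contra hN
    have h₁ : σ (0, 0) ≤ σ (0, -N) := hcol'.monotone (by omega)
    have h₂ : σ (0, -N) < σ (K, -N) := hrow' (by omega)
    omega

theorem ZMod.eq_univ_of_add_one_mem {A : ℕ} [NeZero A] {S : Set (ZMod A)} (hne : S.Nonempty)
    (h : ∀ r ∈ S, r + 1 ∈ S) : S = Set.univ := by
  obtain ⟨r₀, hr₀⟩ := hne
  have hk : ∀ k : ℕ, r₀ + k ∈ S := fun k => by
    induction k with
    | zero => simpa using hr₀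
    | succ k ih => simpa [add_assoc] using h _ ih
  exact Set.eq_univ_of_forall fun r => by simpa using hk (r - r₀).val

section ContentFunction

variable {A : ℕ} {B : ZMod A} {m : ℤ} {C : ℤ → ZMod A}

theorem periodic_of_add_eq_add (h1 : ∀ i, C (i + m) = C i + B) : Periodic C (A * m) :=
  fun i => by
    simpa [nsmul_eq_mul] using
      AddConstMapClass.map_add_nsmul (⟨C, h1⟩ : AddConstMap ℤ (ZMod A) m B) i A

theorem exists_interlacing_fiber_enumerations (hm : 0 < m) (hA : 0 < A)
    (h1 : ∀ i, C (i + m) = C i + B)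
    (h2 : ∀ (r : ZMod A) (i j : ℤ), i < j → C i = r → C j = r →
      (∀ k : ℤ, i < k → k < j → C k ≠ r) → ∃! p : ℤ, i < p ∧ p < j ∧ C p = r + 1) :
    ∃ E : ℤ → ℤ → ℤ, (∀ d, StrictMono (E d)) ∧ (∀ d, Set.range (E d) = C ⁻¹' {(d : ZMod A)}) ∧
      ∀ d, Interlaces (E d) (E (d + 1)) 0 := by
  have : NeZero A := ⟨hA.ne'⟩
  have henum : ∀ r ∈ Set.range C, ∃ e : ℤ → ℤ, StrictMono e ∧ Set.range e = C ⁻¹' {r} :=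
    fun r => (periodic_of_add_eq_add h1).exists_strictMono_range_eq_preimage (by positivity)
  have hnext : ∀ r (e : ℤ → ℤ), StrictMono e → Set.range e = C ⁻¹' {r} →
      ∀ n, ∃! p : ℤ, e n < p ∧ p < e (n + 1) ∧ C p = r + 1 := fun r e he hre n => by
    have hmem : ∀ i, i ∈ Set.range e ↔ C i = r := by simp [hre]
    exact h2 r _ _ (he (lt_add_one n)) ((hmem _).1 ⟨n, rfl⟩) ((hmem _).1 ⟨n + 1, rfl⟩)
      fun k h₁ h₂ hk => he.notMem_range_of_lt_of_lt h₁ h₂ ((hmem k).2 hk)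
  have hsurj : Set.range C = Set.univ := ZMod.eq_univ_of_add_one_mem ⟨C 0, 0, rfl⟩ fun r hr => by
    obtain ⟨e, he, hre⟩ := henum r hr
    obtain ⟨p, ⟨-, -, hp⟩, -⟩ := hnext r e he hre 0
    exact ⟨p, hp⟩
  choose e he hre using fun r => henum r (hsurj ▸ Set.mem_univ r)
  have hone : (1 : ZMod A) ≠ 0 := fun hone => by
    have : Subsingleton (ZMod A) := subsingleton_of_zero_eq_one hone.symm
    obtain ⟨p, ⟨hp₀, hp₁, -⟩, -⟩ :=
      h2 (C 0) 0 1 one_pos rfl (Subsingleton.elim _ _) fun k h₁ h₂ => by omega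
    omega
  have hmem : ∀ r i, i ∈ Set.range (e r) ↔ C i = r := by simp [hre]
  have hs : ∀ r, ∃ s, Interlaces (e r) (e (r + 1)) s := fun r => by
    refine exists_interlaces (he (r + 1)) (fun n k hnk => hone ?_) fun n => ?_
    · have hC := (hmem (r + 1) _).1 ⟨k, rfl⟩
      rw [hnk, (hmem r _).1 ⟨n, rfl⟩] at hC
      exact add_eq_left.1 hC.symm
    · simpa only [hmem] using hnext r (e r) (he r) (hre r) n
  choose s hs using hs
  obtain ⟨u, hu⟩ := exists_reindex_interlaces (f := fun d => e d) (s := fun d => s d)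
    fun d => by simpa using hs d
  exact ⟨fun d n => e d (n + u d), fun d => (he d).comp (strictMono_id.add_const _),
    fun d => ((add_right_surjective (u d)).range_comp (e d)).trans (hre d), hu⟩

end ContentFunction

/-- Realization of content functions: if `C : ℤ → ℤ/Aℤ` satisfies
(1) `C(i+m) = C(i) + B`, and
(2) between any two consecutive occurrences of a value `r` there are unique
occurrences of `r+1` and of `r−1`,
then there exist `K, N > 0` and `a, b ∈ ℤ` with `N + K = A`, `a + b ≡ B (mod A)`,
`a*N − b*K = m`, and a standard doubly periodic tableau `σ ∈ DPT(K,N,a,b)`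
whose content function equals `C`. -/
theorem content_function_realization (m : ℤ) (hm : 0 < m) (A : ℕ) (hA : 0 < A)
    (B : ZMod A) (C : ℤ → ZMod A)
    (h1 : ∀ i : ℤ, C (i + m) = C i + B)
    (h2 : ∀ (r : ZMod A) (i j : ℤ), i < j → C i = r → C j = r →
      (∀ k : ℤ, i < k → k < j → C k ≠ r) →
      (∃! p : ℤ, i < p ∧ p < j ∧ C p = r + 1) ∧
      (∃! p : ℤ, i < p ∧ p < j ∧ C p = r - 1)) :
    ∃ K N a b : ℤ, 0 < K ∧ 0 < N ∧ N + K = (A : ℤ) ∧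
      ((a + b : ℤ) : ZMod A) = B ∧ a * N - b * K = m ∧
      ∃ σ : ℤ × ℤ → ℤ, IsDPT K N a b σ ∧
        ∀ x y : ℤ, C (σ (x, y)) = ((x - y : ℤ) : ZMod A) := by
  have : NeZero A := ⟨hA.ne'⟩
  obtain ⟨β, rfl⟩ := ZMod.intCast_surjective B
  obtain ⟨E, hmono, hrange, hint⟩ :=
    exists_interlacing_fiber_enumerations hm hA h1 fun r i j hij hi hj hk =>
      (h2 r i j hij hi hj hk).1
  have hmem : ∀ d i, i ∈ Set.range (E d) ↔ C i = d := fun d i => by rw [hrange]; rfl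
  obtain ⟨N, hN⟩ := exists_diagonal_shift hmono hint (p := A) (c := 0) fun d i => by simp [hmem]
  simp only [add_zero] at hN
  obtain ⟨b, hb⟩ := exists_diagonal_shift hmono hint (p := β) (c := m) fun d i => by
    rw [hmem, hmem, ← sub_add_cancel i m, h1]
    simp
  have hdet : β * N - A * b = m := by
    have := card_mul_eq_of_fiber_shift C (e := fun r => E r.val) (fun r => hmono _)
      (fun r => by ext i; simp [hmem]) (by positivity)
      fun r n => apply_add_mul_sub_mul_eq hN hb r.val n
    rw [ZMod.card] at this
    exact mul_left_cancel₀ (by positivity) this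
  have hσ : IsDPT (A - N) N (β - b) b fun q => E (q.1 - q.2) q.2 := by
    refine isDPT_of_diagonals hint (by simpa using hN) (fun d n => ?_) fun i => ?_
    · rw [show β - b + b = β by ring, hb, ← hdet]
      ring
    · exact ⟨(C i).val, (hmem _ i).2 (by simp)⟩
  obtain ⟨hK, hN⟩ := hσ.pos (by simpa using hA)
  exact ⟨A - N, N, β - b, b, hK, hN, by ring, by simp, by linear_combination hdet, _, hσ,
    fun x y => (hmem _ _).1 ⟨y, rfl⟩⟩
end

section
/- Fix integers K, N > 0 and a, b with m = a*N − b*K > 0. If σ, τ ∈ DPT(K,N,a,b) satisfy deg(σ) = deg(τ) and C_σ = C_τ, then σ = τ. -/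
open Function Set

theorem Int.iff_of_forall_iff_succ {P : ℤ → Prop} (h : ∀ i, P i ↔ P (i + 1)) (i j : ℤ) :
    P i ↔ P j := by
  induction j using Int.inductionOn' (b := i) with
  | zero => rfl
  | succ k _ ih => exact ih.trans (h k)
  | pred k _ ih => exact ih.trans (by simpa using (h (k - 1)).symm)

theorem StrictMono.apply_add_sub_le {g : ℤ → ℤ} (hg : StrictMono g) {a b : ℤ} (hab : a ≤ b) :
    g a + (b - a) ≤ g b := by
  have : Monotone fun x => g x - x :=
    monotone_int_of_le_succ fun x => by have := hg (lt_add_one x); omega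
  have := this hab
  dsimp only at this
  omega

theorem StrictAnti.apply_add_sub_le {g : ℤ → ℤ} (hg : StrictAnti g) {a b : ℤ} (hab : a ≤ b) :
    g b + (b - a) ≤ g a := by
  have := (show StrictMono fun x => -g x from fun _ _ h => neg_lt_neg (hg h)).apply_add_sub_le hab
  omega

theorem Int.eq_add_of_strictMono_of_surjective {φ : ℤ → ℤ} (hm : StrictMono φ)
    (hs : Surjective φ) (y : ℤ) : φ y = y + φ 0 := by
  have succ : ∀ y, φ (y + 1) = φ y + 1 := fun y => by
    obtain ⟨z, hz⟩ := hs (φ y + 1)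
    have hyz : y < z := hm.lt_iff_lt.1 (by omega)
    have := hm.monotone (show y + 1 ≤ z by omega)
    have := hm (lt_add_one y)
    omega
  induction y using Int.induction_on with
  | zero => simp
  | succ k ih => rw [succ, ih]; ring
  | pred k ih => have := succ (-(k : ℤ) - 1); simp only [sub_add_cancel] at this; omega

theorem exists_shift_of_strictAnti_of_range_eq {u v : ℤ → ℤ} (hu : StrictAnti u)
    (hv : StrictAnti v) (h : range u = range v) : ∃ t, ∀ y, v y = u (y + t) := by
  choose φ hφ using fun y => (h ▸ mem_range_self y : v y ∈ range u)
  have hm : StrictMono φ := fun y y' hyy' => hu.lt_iff_gt.1 (by rw [hφ, hφ]; exact hv hyy')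
  have hs : Surjective φ := fun z => by
    obtain ⟨y, hy⟩ := (h ▸ mem_range_self z : u z ∈ range v)
    exact ⟨y, hu.injective (by rw [hφ, hy])⟩
  exact ⟨φ 0, fun y => by rw [← hφ, Int.eq_add_of_strictMono_of_surjective hm hs]⟩

theorem Int.modEq_of_strictAnti_of_modEq {g : ℤ → ℤ} {N n : ℤ} (hg : StrictAnti g) (hN : 0 < N)
    (hper : ∀ q y, g (y + q * N) = g y - q * n) {y y' : ℤ} (h : g y ≡ g y' [ZMOD n]) :
    y ≡ y' [ZMOD N] := by
  obtain ⟨r, hr, q, hq⟩ : ∃ r, r = (y' - y) % N ∧ ∃ q, q = (y' - y) / N := ⟨_, rfl, _, rfl⟩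
  have hy' : y' = y + r + q * N := by
    have := Int.emod_add_mul_ediv (y' - y) N
    rw [← hr, ← hq] at this
    linarith
  have hr_nonneg : 0 ≤ r := hr ▸ Int.emod_nonneg _ hN.ne'
  have hrN : r < N := hr ▸ Int.emod_lt_of_pos _ hN
  have hdvd : n ∣ g y - g (y + r) := by
    have hgy' : g y - g (y + r) = -(g y' - g y) - q * n := by rw [hy', hper]; ring
    exact hgy' ▸ dvd_sub (Int.modEq_iff_dvd.1 h).neg_right (dvd_mul_left n q)
  -- on one period `[y, y + N)` the values of `g` lie in a window of length `< n`
  have hlow := hg.apply_add_sub_le (show y ≤ y + r by omega)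
  have hhigh := hg.apply_add_sub_le (show y + r ≤ y + N by omega)
  have hperiod := hper 1 y
  simp only [one_mul, add_sub_cancel_left] at hlow hperiod
  have hr0 : r = 0 := by
    have := Int.eq_zero_of_dvd_of_nonneg_of_lt (by omega) (by omega) hdvd
    omega
  exact Int.modEq_iff_dvd.2 ⟨q, by rw [hy', hr0]; ring⟩

theorem Finset.sum_range_add_of_quasiperiodic {g : ℤ → ℤ} {N : ℕ} {K : ℤ}
    (hg : ∀ y, g (y + N) = g y - K) (t : ℤ) :
    ∑ i ∈ Finset.range N, g (i + t) = ∑ i ∈ Finset.range N, g i - t * K := by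
  have succ : ∀ t : ℤ,
      ∑ i ∈ Finset.range N, g (i + (t + 1)) = ∑ i ∈ Finset.range N, g (i + t) - K := by
    intro t
    have h₁ := Finset.sum_range_succ' (fun i : ℕ => g (i + t)) N
    have h₂ := Finset.sum_range_succ (fun i : ℕ => g (i + t)) N
    simp only [Nat.cast_add, Nat.cast_one, Nat.cast_zero, zero_add, add_right_comm _ (1 : ℤ),
      add_assoc] at h₁ h₂ ⊢
    rw [add_comm (N : ℤ), hg] at h₂
    linarith
  induction t using Int.induction_on with
  | zero => simp
  | succ k ih => rw [succ, ih]; ring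
  | pred k ih =>
    have := succ (-(k : ℤ) - 1)
    rw [sub_add_cancel, ih] at this
    linarith

structure IsPeriodicTableau (K N : ℤ) (f : ℤ × ℤ → ℤ) : Prop where
  surjective : Surjective f
  periodic : ∀ x y, f (x + K, y - N) = f (x, y)
  lt_right : ∀ x y, f (x, y) < f (x + 1, y)
  lt_up : ∀ x y, f (x, y) < f (x, y + 1)

theorem IsDPT.isPeriodicTableau {K N a b : ℤ} {f : ℤ × ℤ → ℤ} (h : IsDPT K N a b f) :
    IsPeriodicTableau K N f :=
  ⟨h.1, h.2.1, h.2.2.2.1, h.2.2.2.2⟩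

def IsContent (n : ℤ) (f : ℤ × ℤ → ℤ) (c : ℤ → ℤ) : Prop :=
  ∀ x y, c (f (x, y)) ≡ x - y [ZMOD n]

theorem exists_isContent {n : ℤ} {f g : ℤ × ℤ → ℤ} (hf : Surjective f) (hg : Surjective g)
    (h : ∀ x y x' y', f (x, y) = g (x', y') → n ∣ (x - y) - (x' - y')) :
    ∃ c, IsContent n f c ∧ IsContent n g c := by
  choose p hp using hg
  refine ⟨fun i => (p i).1 - (p i).2, fun x y => ?_, fun x y => ?_⟩
  · exact Int.modEq_iff_dvd.2 (h x y _ _ (hp _).symm)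
  · obtain ⟨⟨x', y'⟩, h'⟩ := hf (g (x, y))
    exact (Int.modEq_iff_dvd.2 (h x' y' _ _ (h'.trans (hp _).symm))).trans
      (Int.modEq_iff_dvd.2 (h x' y' x y h')).symm

/-- `rowStart σ 1` is the paper's `𝓛(σ)`. -/
noncomputable def rowStart (f : ℤ × ℤ → ℤ) (i y : ℤ) : ℤ := sInf {x | i ≤ f (x, y)}

noncomputable def rowStartContent (f : ℤ × ℤ → ℤ) (i y : ℤ) : ℤ := rowStart f i y - y

namespace IsPeriodicTableau

variable {K N : ℤ} {f : ℤ × ℤ → ℤ} {c : ℤ → ℤ}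

theorem strictMono_row (hf : IsPeriodicTableau K N f) (y : ℤ) : StrictMono fun x => f (x, y) :=
  strictMono_int_of_lt_succ fun x => hf.lt_right x y

theorem apply_add_mul (hf : IsPeriodicTableau K N f) (q x y : ℤ) :
    f (x, y + q * N) = f (x + q * K, y) := by
  have period : ∀ x y, f (x, y + N) = f (x + K, y) := fun x y => by
    simpa using (hf.periodic x (y + N)).symm
  induction q using Int.induction_on generalizing x with
  | zero => simp
  | succ k ih =>
    rw [show y + (k + 1) * N = y + k * N + N by ring, period, ih]
    ring_nf
  | pred k ih =>
    have := period (x - K) (y + (-k - 1) * N)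
    rw [show y + (-k - 1) * N + N = y + -k * N by ring, ih, sub_add_cancel] at this
    rw [← this]
    ring_nf

theorem isLeast_rowStart (hf : IsPeriodicTableau K N f) (i y : ℤ) :
    IsLeast {x | i ≤ f (x, y)} (rowStart f i y) := by
  have hrow := hf.strictMono_row y
  have nonempty : {x | i ≤ f (x, y)}.Nonempty :=
    ⟨|i - f (0, y)|, by have := hrow.apply_add_sub_le (abs_nonneg (i - f (0, y))); grind⟩
  have bdd : BddBelow {x | i ≤ f (x, y)} :=
    ⟨-|i - f (0, y)|, fun x hx => by
      by_contra! hlt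
      have := hrow.apply_add_sub_le (show x ≤ 0 by grind)
      grind⟩
  exact ⟨Int.csInf_mem nonempty bdd, fun x hx => csInf_le bdd hx⟩

theorem le_apply_iff (hf : IsPeriodicTableau K N f) {i x y : ℤ} :
    i ≤ f (x, y) ↔ rowStart f i y ≤ x :=
  ⟨fun h => (hf.isLeast_rowStart i y).2 h,
    fun h => ((hf.isLeast_rowStart i y).1).trans ((hf.strictMono_row y).monotone h)⟩

theorem rowStart_add_mul (hf : IsPeriodicTableau K N f) (i y q : ℤ) :
    rowStart f i (y + q * N) = rowStart f i y - q * K :=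
  eq_of_forall_ge_iff fun x => by
    rw [← hf.le_apply_iff, hf.apply_add_mul, hf.le_apply_iff, sub_le_iff_le_add]

theorem rowStartContent_add_mul (hf : IsPeriodicTableau K N f) (i y q : ℤ) :
    rowStartContent f i (y + q * N) = rowStartContent f i y - q * (N + K) := by
  rw [rowStartContent, rowStartContent, hf.rowStart_add_mul]
  ring

theorem strictAnti_rowStartContent (hf : IsPeriodicTableau K N f) (i : ℤ) :
    StrictAnti (rowStartContent f i) :=
  strictAnti_int_of_succ_lt fun y => by
    have : rowStart f i (y + 1) ≤ rowStart f i y :=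
      hf.le_apply_iff.1 ((hf.le_apply_iff.2 le_rfl).trans (hf.lt_up _ y).le)
    unfold rowStartContent
    omega

theorem rowStart_of_apply_eq (hf : IsPeriodicTableau K N f) {i x y : ℤ} (h : f (x, y) = i) :
    rowStart f i y = x ∧ rowStart f (i + 1) y = x + 1 :=
  ⟨eq_of_forall_ge_iff fun x' => by
      rw [← hf.le_apply_iff, ← h]
      exact (hf.strictMono_row y).le_iff_le,
    eq_of_forall_ge_iff fun x' => by
      rw [← hf.le_apply_iff, ← h, Int.add_one_le_iff, Int.add_one_le_iff]
      exact (hf.strictMono_row y).lt_iff_lt⟩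

theorem rowStart_succ_of_forall_ne (hf : IsPeriodicTableau K N f) {i y : ℤ}
    (h : ∀ x, f (x, y) ≠ i) : rowStart f (i + 1) y = rowStart f i y :=
  eq_of_forall_ge_iff fun x => by
    rw [← hf.le_apply_iff, ← hf.le_apply_iff, Int.add_one_le_iff, (h x).symm.le_iff_lt]

theorem exists_apply_eq_iff_of_modEq (hf : IsPeriodicTableau K N f) {i y y' : ℤ}
    (h : y ≡ y' [ZMOD N]) : (∃ x, f (x, y) = i) ↔ ∃ x, f (x, y') = i := by
  obtain ⟨q, hq⟩ := Int.modEq_iff_dvd.1 h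
  have hy' : y' = y + q * N := by linarith
  exact ⟨fun ⟨x, hx⟩ => ⟨x - q * K, by rw [hy', hf.apply_add_mul, sub_add_cancel, hx]⟩,
    fun ⟨x, hx⟩ => ⟨x + q * K, by rw [← hf.apply_add_mul, ← hy', hx]⟩⟩

theorem exists_apply_eq_of_rowStartContent_modEq (hf : IsPeriodicTableau K N f) (hN : 0 < N)
    {i j x' y y' : ℤ} (h' : f (x', y') = i)
    (h : rowStartContent f j y ≡ rowStartContent f j y' [ZMOD N + K]) : ∃ x, f (x, y) = i :=
  (hf.exists_apply_eq_iff_of_modEq (Int.modEq_of_strictAnti_of_modEq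
    (hf.strictAnti_rowStartContent j) hN (fun q y => hf.rowStartContent_add_mul j y q) h)).2
    ⟨x', h'⟩

theorem exists_apply_eq_iff_modEq (hf : IsPeriodicTableau K N f) (hN : 0 < N)
    (hc : IsContent (N + K) f c) {i y : ℤ} :
    (∃ x, f (x, y) = i) ↔ rowStartContent f i y ≡ c i [ZMOD N + K] := by
  have key : ∀ {x y}, f (x, y) = i → rowStartContent f i y ≡ c i [ZMOD N + K] := fun {x y} h => by
    rw [rowStartContent, (hf.rowStart_of_apply_eq h).1, ← h]
    exact (hc x y).symm
  refine ⟨fun ⟨x, hx⟩ => key hx, fun h => ?_⟩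
  obtain ⟨⟨x₀, y₀⟩, h₀⟩ := hf.surjective i
  exact hf.exists_apply_eq_of_rowStartContent_modEq hN h₀ (h.trans (key h₀).symm)

theorem exists_apply_eq_iff_modEq_succ (hf : IsPeriodicTableau K N f) (hN : 0 < N)
    (hc : IsContent (N + K) f c) {i y : ℤ} :
    (∃ x, f (x, y) = i) ↔ rowStartContent f (i + 1) y ≡ c i + 1 [ZMOD N + K] := by
  have key : ∀ {x y}, f (x, y) = i → rowStartContent f (i + 1) y ≡ c i + 1 [ZMOD N + K] :=
    fun {x y} h => by
      rw [rowStartContent, (hf.rowStart_of_apply_eq h).2, ← h, add_sub_right_comm]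
      exact (hc x y).symm.add_right 1
  refine ⟨fun ⟨x, hx⟩ => key hx, fun h => ?_⟩
  obtain ⟨⟨x₀, y₀⟩, h₀⟩ := hf.surjective i
  exact hf.exists_apply_eq_of_rowStartContent_modEq hN h₀ (h.trans (key h₀).symm)

theorem rowStartContent_succ (hf : IsPeriodicTableau K N f) (hN : 0 < N)
    (hc : IsContent (N + K) f c) (i y : ℤ) :
    rowStartContent f (i + 1) y =
      rowStartContent f i y + if rowStartContent f i y ≡ c i [ZMOD N + K] then 1 else 0 := by
  split_ifs with h
  · obtain ⟨x, hx⟩ := (hf.exists_apply_eq_iff_modEq hN hc).2 h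
    rw [rowStartContent, rowStartContent, (hf.rowStart_of_apply_eq hx).1,
      (hf.rowStart_of_apply_eq hx).2]
    ring
  · have : ∀ x, f (x, y) ≠ i := fun x hx => h ((hf.exists_apply_eq_iff_modEq hN hc).1 ⟨x, hx⟩)
    rw [rowStartContent, rowStartContent, hf.rowStart_succ_of_forall_ne this, add_zero]

theorem rowStartContent_eq_succ_sub (hf : IsPeriodicTableau K N f) (hN : 0 < N)
    (hc : IsContent (N + K) f c) (i y : ℤ) :
    rowStartContent f i y = rowStartContent f (i + 1) y -
      if rowStartContent f (i + 1) y ≡ c i + 1 [ZMOD N + K] then 1 else 0 := by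
  split_ifs with h
  · obtain ⟨x, hx⟩ := (hf.exists_apply_eq_iff_modEq_succ hN hc).2 h
    rw [rowStartContent, rowStartContent, (hf.rowStart_of_apply_eq hx).1,
      (hf.rowStart_of_apply_eq hx).2]
    ring
  · have : ∀ x, f (x, y) ≠ i :=
      fun x hx => h ((hf.exists_apply_eq_iff_modEq_succ hN hc).1 ⟨x, hx⟩)
    rw [rowStartContent, rowStartContent, hf.rowStart_succ_of_forall_ne this, sub_zero]

theorem mem_range_rowStartContent_of_modEq (hf : IsPeriodicTableau K N f) {i y r : ℤ}
    (h : r ≡ rowStartContent f i y [ZMOD N + K]) : r ∈ range (rowStartContent f i) := by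
  obtain ⟨q, hq⟩ := Int.modEq_iff_dvd.1 h
  exact ⟨y + q * N, by rw [hf.rowStartContent_add_mul]; linarith⟩

theorem mem_range_rowStartContent_of_modEq_content (hf : IsPeriodicTableau K N f) (hN : 0 < N)
    (hc : IsContent (N + K) f c) {i r : ℤ} (h : r ≡ c i [ZMOD N + K]) :
    r ∈ range (rowStartContent f i) := by
  obtain ⟨⟨x₀, y₀⟩, h₀⟩ := hf.surjective i
  exact hf.mem_range_rowStartContent_of_modEq
    (h.trans ((hf.exists_apply_eq_iff_modEq hN hc).1 ⟨x₀, h₀⟩).symm)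

theorem mem_range_rowStartContent_succ_of_modEq_content (hf : IsPeriodicTableau K N f)
    (hN : 0 < N) (hc : IsContent (N + K) f c) {i r : ℤ} (h : r ≡ c i + 1 [ZMOD N + K]) :
    r ∈ range (rowStartContent f (i + 1)) := by
  obtain ⟨⟨x₀, y₀⟩, h₀⟩ := hf.surjective i
  exact hf.mem_range_rowStartContent_of_modEq
    (h.trans ((hf.exists_apply_eq_iff_modEq_succ hN hc).1 ⟨x₀, h₀⟩).symm)

theorem mem_range_rowStartContent_succ_iff (hf : IsPeriodicTableau K N f) (hN : 0 < N)
    (hc : IsContent (N + K) f c) {i r : ℤ} :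
    r ∈ range (rowStartContent f (i + 1)) ↔
      r ≡ c i + 1 [ZMOD N + K] ∨
        (r ∈ range (rowStartContent f i) ∧ ¬ r ≡ c i [ZMOD N + K]) := by
  constructor
  · rintro ⟨y, rfl⟩
    rw [hf.rowStartContent_succ hN hc]
    split_ifs with h
    · exact Or.inl (h.add_right 1)
    · exact Or.inr ⟨⟨y, (add_zero _).symm⟩, by rwa [add_zero]⟩
  · rintro (h | ⟨⟨y, rfl⟩, h⟩)
    · exact hf.mem_range_rowStartContent_succ_of_modEq_content hN hc h
    · exact ⟨y, by rw [hf.rowStartContent_succ hN hc, if_neg h, add_zero]⟩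

theorem mem_range_rowStartContent_iff_succ (hf : IsPeriodicTableau K N f) (hN : 0 < N)
    (hc : IsContent (N + K) f c) {i r : ℤ} :
    r ∈ range (rowStartContent f i) ↔
      r ≡ c i [ZMOD N + K] ∨
        (r ∈ range (rowStartContent f (i + 1)) ∧ ¬ r ≡ c i + 1 [ZMOD N + K]) := by
  constructor
  · rintro ⟨y, rfl⟩
    rw [hf.rowStartContent_eq_succ_sub hN hc]
    split_ifs with h
    · exact Or.inl (by simpa using h.sub_right 1)
    · exact Or.inr ⟨⟨y, (sub_zero _).symm⟩, by rwa [sub_zero]⟩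
  · rintro (h | ⟨⟨y, rfl⟩, h⟩)
    · exact hf.mem_range_rowStartContent_of_modEq_content hN hc h
    · exact ⟨y, by rw [hf.rowStartContent_eq_succ_sub hN hc, if_neg h, sub_zero]⟩

variable {g : ℤ × ℤ → ℤ}

theorem range_rowStartContent_eq (hf : IsPeriodicTableau K N f) (hg : IsPeriodicTableau K N g)
    (hN : 0 < N) (hcf : IsContent (N + K) f c) (hcg : IsContent (N + K) g c) (i : ℤ) :
    range (rowStartContent f i) = range (rowStartContent g i) := by
  ext r
  -- the cell `(r, 0)` has content `r`, which puts `r` in both ranges at level `f (r, 0)`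
  have hr : r ≡ c (f (r, 0)) [ZMOD N + K] := by simpa using (hcf r 0).symm
  refine (Int.iff_of_forall_iff_succ
    (P := fun i => r ∈ range (rowStartContent f i) ↔ r ∈ range (rowStartContent g i))
    (fun i => ⟨fun h => ?_, fun h => ?_⟩) (f (r, 0)) i).1
    (iff_of_true (hf.mem_range_rowStartContent_of_modEq_content hN hcf hr)
      (hg.mem_range_rowStartContent_of_modEq_content hN hcg hr))
  · rw [hf.mem_range_rowStartContent_succ_iff hN hcf, hg.mem_range_rowStartContent_succ_iff hN hcg,
      h]
  · rw [hf.mem_range_rowStartContent_iff_succ hN hcf, hg.mem_range_rowStartContent_iff_succ hN hcg,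
      h]

theorem exists_eq_shift (hf : IsPeriodicTableau K N f) (hg : IsPeriodicTableau K N g)
    (hN : 0 < N) (hcf : IsContent (N + K) f c) (hcg : IsContent (N + K) g c) :
    ∃ t, ∀ x y, g (x, y) = f (x + t, y + t) := by
  obtain ⟨t, ht⟩ := exists_shift_of_strictAnti_of_range_eq (hf.strictAnti_rowStartContent 0)
    (hg.strictAnti_rowStartContent 0) (hf.range_rowStartContent_eq hg hN hcf hcg 0)
  -- the evolution rules see only the values of `rowStartContent`, so the translation persists
  have hshift : ∀ i y, rowStartContent g i y = rowStartContent f i (y + t) := fun i =>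
    (Int.iff_of_forall_iff_succ
      (P := fun i => ∀ y, rowStartContent g i y = rowStartContent f i (y + t))
      (fun i => ⟨fun h y => by
        rw [hg.rowStartContent_succ hN hcg i y, hf.rowStartContent_succ hN hcf i (y + t), h],
        fun h y => by
        rw [hg.rowStartContent_eq_succ_sub hN hcg i y,
          hf.rowStartContent_eq_succ_sub hN hcf i (y + t), h]⟩) 0 i).1 ht
  refine ⟨t, fun x y => eq_of_forall_le_iff fun i => ?_⟩
  have := hshift i y
  rw [hg.le_apply_iff, hf.le_apply_iff]
  unfold rowStartContent at this
  omega

theorem rowStart_of_eq_shift (hf : IsPeriodicTableau K N f) (hg : IsPeriodicTableau K N g)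
    {t : ℤ} (h : ∀ x y, g (x, y) = f (x + t, y + t)) (i y : ℤ) :
    rowStart g i y = rowStart f i (y + t) - t :=
  eq_of_forall_ge_iff fun x => by
    rw [← hg.le_apply_iff, h, hf.le_apply_iff, sub_le_iff_le_add]

end IsPeriodicTableau

theorem dpt_determined_by_degree_and_content_general (K : ℤ) (N : ℕ) (hK : 0 < K)
    (hN : 0 < N) (a b : ℤ)
    (σ τ : ℤ × ℤ → ℤ)
    (hσ : IsDPT K (N : ℤ) a b σ) (hτ : IsDPT K (N : ℤ) a b τ)
    (Lσ Lτ : ℤ → ℤ)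
    (hLσ : ∀ y : ℤ, IsLeast {x : ℤ | 1 ≤ σ (x, y)} (Lσ y))
    (hLτ : ∀ y : ℤ, IsLeast {x : ℤ | 1 ≤ τ (x, y)} (Lτ y))
    (hdeg : ∑ i ∈ Finset.range N, Lσ (i : ℤ) = ∑ i ∈ Finset.range N, Lτ (i : ℤ))
    (hcont : ∀ x y x' y' : ℤ, σ (x, y) = τ (x', y') →
      ((N : ℤ) + K) ∣ ((x - y) - (x' - y'))) :
    σ = τ := by
  have hσ' := hσ.isPeriodicTableau
  have hτ' := hτ.isPeriodicTableau
  have hN' : (0 : ℤ) < N := by exact_mod_cast hN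
  obtain ⟨c, hcσ, hcτ⟩ := exists_isContent hσ'.surjective hτ'.surjective hcont
  obtain ⟨t, ht⟩ := hσ'.exists_eq_shift hτ' hN' hcσ hcτ
  have hLσ_eq : Lσ = rowStart σ 1 := funext fun y => (hLσ y).unique (hσ'.isLeast_rowStart 1 y)
  have hLτ_eq : ∀ y, Lτ y = Lσ (y + t) - t := fun y => by
    rw [(hLτ y).unique (hτ'.isLeast_rowStart 1 y), hσ'.rowStart_of_eq_shift hτ' ht, hLσ_eq]
  have hLσ_add : ∀ y, Lσ (y + N) = Lσ y - K := fun y => by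
    simpa [hLσ_eq] using hσ'.rowStart_add_mul 1 y 1
  have htNK : t * (N + K) = 0 := by
    have := Finset.sum_range_add_of_quasiperiodic hLσ_add t
    simp only [hLτ_eq, Finset.sum_sub_distrib, Finset.sum_const, Finset.card_range,
      nsmul_eq_mul] at hdeg
    linarith
  have ht0 : t = 0 := (mul_eq_zero.1 htNK).resolve_right (by omega)
  funext ⟨x, y⟩
  simp [ht, ht0]

/-- A standard doubly periodic tableau is determined by its degree and its content
function: if `σ, τ ∈ DPT(K,N,a,b)` have equal degrees (equivalently, equal sums
`∑_{i<N} 𝓛(σ)(i) = ∑_{i<N} 𝓛(τ)(i)` of their associated partitions, where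
`𝓛(σ)(y)` is the least `x` with `σ(x,y) ≥ 1`) and equal content functions
(`σ(x,y) = τ(x',y')` implies `x − y ≡ x' − y' (mod N+K)`), then `σ = τ`. -/
theorem dpt_determined_by_degree_and_content (K : ℤ) (N : ℕ) (hK : 0 < K)
    (hN : 0 < N) (a b : ℤ) (hm : 0 < a * (N : ℤ) - b * K)
    (σ τ : ℤ × ℤ → ℤ)
    (hσ : IsDPT K (N : ℤ) a b σ) (hτ : IsDPT K (N : ℤ) a b τ)
    (Lσ Lτ : ℤ → ℤ)
    (hLσ : ∀ y : ℤ, IsLeast {x : ℤ | 1 ≤ σ (x, y)} (Lσ y))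
    (hLτ : ∀ y : ℤ, IsLeast {x : ℤ | 1 ≤ τ (x, y)} (Lτ y))
    (hdeg : ∑ i ∈ Finset.range N, Lσ (i : ℤ) = ∑ i ∈ Finset.range N, Lτ (i : ℤ))
    (hcont : ∀ x y x' y' : ℤ, σ (x, y) = τ (x', y') →
      ((N : ℤ) + K) ∣ ((x - y) - (x' - y'))) :
    σ = τ :=
  dpt_determined_by_degree_and_content_general K N hK hN a b σ τ hσ hτ Lσ Lτ hLσ hLτ hdeg hcont
end

section
/- Let K, N > 0 and take (a,b) = (1,0), so m = N. Let ≈ be the translation equivalence on DPT(K,N,1,0): σ ≈ τ if and only if there exist i, j ∈ ℤ with τ(x,y) = σ(x−i, y−j) for all (x,y) ∈ ℤ². Then the quotient DPT(K,N,1,0)/≈ is finite of cardinality K^(N−1). Equivalently, the set of σ ∈ DPT(K,N,1,0) with σ(0,0) = 0 has exactly K^(N−1) elements. -/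
open Finset Fin.CommRing

theorem Int.map_add_mul_of_map_add {f : ℤ → ℤ} {n p : ℤ} (hf : ∀ y, f (y + n) = f y + p)
    (y q : ℤ) : f (y + n * q) = f y + p * q := by
  simpa [mul_comm] using AddConstMapClass.map_add_zsmul (AddConstMap.mk f hf) y q

section PeriodicExtension

variable {n : ℕ} [NeZero n]

theorem Fin.val_intCast_eq_emod (y : ℤ) : (((y : Fin n) : ℕ) : ℤ) = y % n := by
  rw [Fin.val_intCast, Int.toNat_of_nonneg (Int.emod_nonneg _ (by exact_mod_cast NeZero.ne n))]

theorem Fin.val_intCast_add_mul_ediv (y : ℤ) : (((y : Fin n) : ℕ) : ℤ) + n * (y / n) = y := by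
  rw [Fin.val_intCast_eq_emod, Int.emod_add_mul_ediv]

theorem Fin.intCast_val_add_mul (r : Fin n) (k : ℤ) :
    (((r : ℤ) + n * k : ℤ) : Fin n) = r := by
  push_cast
  simp

-- `w y` is `w` at `y mod n`: the coercion `ℤ → Fin n` comes from `Fin.CommRing`.
def periodicExtension (p : ℤ) (w : Fin n → ℤ) (y : ℤ) : ℤ :=
  w y + p * (y / n)

variable {p : ℤ} {w : Fin n → ℤ}

theorem periodicExtension_natCast (s : Fin n) : periodicExtension p w s = w s := by
  have hs : ((s : ℕ) : ℤ) < n := by exact_mod_cast s.isLt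
  simp [periodicExtension, Int.ediv_eq_zero_of_lt, hs]

theorem periodicExtension_add (y : ℤ) :
    periodicExtension p w (y + n) = periodicExtension p w y + p := by
  have hn : (n : ℤ) ≠ 0 := by exact_mod_cast NeZero.ne n
  simp only [periodicExtension, Int.cast_add, Int.cast_natCast, Fin.natCast_self, add_zero,
    Int.add_ediv_of_dvd_right dvd_rfl, Int.ediv_self hn]
  ring

theorem eq_periodicExtension {f : ℤ → ℤ} (hf : ∀ y, f (y + n) = f y + p) :
    f = periodicExtension p (fun s : Fin n => f s) := by
  ext y
  conv_lhs => rw [← Fin.val_intCast_add_mul_ediv (n := n) y]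
  exact Int.map_add_mul_of_map_add hf _ _

theorem periodicExtension_strictMono (hw : StrictMono w) (hp : ∀ s t, w s < w t + p) :
    StrictMono (periodicExtension p w) := by
  intro y z hyz
  have hn : (0 : ℤ) < n := by exact_mod_cast Nat.pos_of_ne_zero (NeZero.ne n)
  have hdy := Fin.val_intCast_add_mul_ediv (n := n) y
  have hdz := Fin.val_intCast_add_mul_ediv (n := n) z
  simp only [periodicExtension]
  obtain hq | hq := (Int.ediv_le_ediv hn hyz.le).lt_or_eq
  · have hpq : p * (y / n) + p ≤ p * (z / n) := by
      nlinarith [hp (y : Fin n) (y : Fin n), Int.add_one_le_iff.mpr hq]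
    linarith [hp (y : Fin n) (z : Fin n)]
  · have hyz' : (y : Fin n) < (z : Fin n) := by
      rw [Fin.lt_def, ← Int.ofNat_lt]
      linarith [hq ▸ hdy]
    rw [hq]
    linarith [hw hyz']

end PeriodicExtension

section Transversal

variable {N K : ℕ}

def transversal (c : Fin N → Fin K) : Finset ℤ :=
  univ.image fun r : Fin N => (r : ℤ) + N * c r

theorem mem_transversal_bounds {c : Fin N → Fin K} {t : ℤ} (ht : t ∈ transversal c) :
    0 ≤ t ∧ t < N * K := by
  obtain ⟨r, -, rfl⟩ := mem_image.1 ht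
  have hr : (r : ℤ) + 1 ≤ N := by exact_mod_cast r.isLt
  have hc : (c r : ℤ) + 1 ≤ K := by exact_mod_cast (c r).isLt
  constructor <;> nlinarith

variable [NeZero N]

theorem card_transversal (c : Fin N → Fin K) : (transversal c).card = N := by
  rw [transversal, card_image_of_injective, card_univ, Fintype.card_fin]
  intro r s h
  simpa only [Fin.intCast_val_add_mul] using congrArg (fun t : ℤ => (t : Fin N)) h

theorem exists_mem_transversal_intCast_eq (c : Fin N → Fin K) (v : ℤ) :
    ∃ t ∈ transversal c, (t : Fin N) = v :=
  ⟨_, mem_image_of_mem _ (mem_univ (v : Fin N)), Fin.intCast_val_add_mul _ _⟩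

theorem zero_mem_transversal_iff [NeZero K] (c : Fin N → Fin K) :
    0 ∈ transversal c ↔ c 0 = 0 := by
  constructor
  · intro h
    obtain ⟨r, -, hr⟩ := mem_image.1 h
    have hcr : (0 : ℤ) ≤ N * c r := by positivity
    have hr0 : r = 0 := Fin.val_eq_zero_iff.mp (by omega)
    subst hr0
    exact Fin.ext (by simpa [NeZero.ne N] using hr)
  · intro h
    exact mem_image.2 ⟨0, mem_univ _, by simp [h]⟩

theorem transversal_injective :
    Function.Injective (transversal : (Fin N → Fin K) → Finset ℤ) := by
  intro c c' h
  funext r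
  have hr : (r : ℤ) + N * c r ∈ transversal c' := h ▸ mem_image_of_mem _ (mem_univ r)
  obtain ⟨r', -, hr'⟩ := mem_image.1 hr
  obtain rfl : r' = r := by
    simpa only [Fin.intCast_val_add_mul] using congrArg (fun t : ℤ => (t : Fin N)) hr'
  have hN : (N : ℤ) ≠ 0 := by exact_mod_cast NeZero.ne N
  exact Fin.ext (by exact_mod_cast (mul_left_cancel₀ hN (add_left_cancel hr')).symm)

theorem exists_transversal_eq_image {u : Fin N → ℤ} (hu : ∀ s, 0 ≤ u s ∧ u s < N * K)
    (hres : Function.Surjective fun s => (u s : Fin N)) :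
    ∃ c : Fin N → Fin K, transversal c = univ.image u := by
  set e := Equiv.ofBijective _ hres.bijective_of_finite
  have hN : (0 : ℤ) < N := by exact_mod_cast Nat.pos_of_ne_zero (NeZero.ne N)
  have hquot : ∀ s, 0 ≤ u s / N ∧ u s / N < K := fun s =>
    ⟨Int.ediv_nonneg (hu s).1 hN.le, Int.ediv_lt_of_lt_mul hN (by linarith [(hu s).2])⟩
  refine ⟨fun r => ⟨(u (e.symm r) / N).toNat, by have := hquot (e.symm r); omega⟩, ?_⟩
  have hlift : ∀ r : Fin N, (r : ℤ) + N * ((u (e.symm r) / N).toNat : ℕ) = u (e.symm r) := by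
    intro r
    have hr : ((r : ℕ) : ℤ) = u (e.symm r) % N := by
      rw [← Fin.val_intCast_eq_emod]
      exact congrArg (fun i : Fin N => ((i : ℕ) : ℤ)) (e.apply_symm_apply r).symm
    rw [hr, Int.toNat_of_nonneg (hquot _).1, Int.emod_add_mul_ediv]
  simp only [transversal, hlift]
  change univ.image (u ∘ e.symm) = _
  rw [← image_image, image_univ_equiv]

end Transversal

theorem Set.ncard_setOf_apply_eq {α β : Type*} [Fintype α] [DecidableEq α] [Fintype β]
    [DecidableEq β] (i : α) (b : β) :
    {c : α → β | c i = b}.ncard = Fintype.card β ^ (Fintype.card α - 1) := by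
  rw [Set.ncard_eq_toFinset_card', Set.toFinset_ofPred, ← Fintype.piFinset_univ]
  exact Fintype.card_filter_piFinset_const_eq_of_mem _ i (Finset.mem_univ b)

section Tableau

variable {K N : ℕ} {σ : ℤ × ℤ → ℤ}

theorem IsDPT.apply_eq_add_mul (hσ : IsDPT K N 1 0 σ) (x y : ℤ) :
    σ (x, y) = σ (0, y) + N * x := by
  have hrow : ∀ x, σ (x + 1, y) = σ (x, y) + N := fun x => by simpa using hσ.2.2.1 x y
  simpa using Int.map_add_mul_of_map_add (f := fun x => σ (x, y)) hrow 0 x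

theorem IsDPT.column_add (hσ : IsDPT K N 1 0 σ) (y : ℤ) :
    σ (0, y + N) = σ (0, y) + N * K := by
  have h := hσ.2.1 0 (y + N)
  rw [add_sub_cancel_right, zero_add] at h
  rw [← h, hσ.apply_eq_add_mul]

theorem IsDPT.column_strictMono (hσ : IsDPT K N 1 0 σ) : StrictMono fun y => σ (0, y) :=
  strictMono_int_of_lt_succ fun y => hσ.2.2.2.2 0 y

theorem IsDPT.column_bounds (hσ : IsDPT K N 1 0 σ) (h0 : σ (0, 0) = 0) (s : Fin N) :
    0 ≤ σ (0, s) ∧ σ (0, s) < N * K := by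
  have hN := hσ.column_add 0
  rw [zero_add, h0, zero_add] at hN
  have hs : (0 : ℤ) ≤ (s : ℕ) := Int.natCast_nonneg _
  exact ⟨h0.symm.trans_le (hσ.column_strictMono.monotone hs),
    (hσ.column_strictMono (by exact_mod_cast s.isLt)).trans_eq hN⟩

variable [NeZero N]

theorem IsDPT.surjective_column_residue (hσ : IsDPT K N 1 0 σ) :
    Function.Surjective fun s : Fin N => (σ (0, s) : Fin N) := by
  intro r
  obtain ⟨⟨x, y⟩, hxy⟩ := hσ.1 r
  refine ⟨y, ?_⟩
  have hy := congrFun (eq_periodicExtension (f := fun y => σ (0, y)) hσ.column_add) y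
  rw [periodicExtension] at hy
  have hr : ((r : ℕ) : ℤ) = σ (0, ((y : Fin N) : ℕ)) + N * (K * (y / N) + x) := by
    rw [← hxy, hσ.apply_eq_add_mul, hy]
    ring
  have key := congrArg (fun t : ℤ => (t : Fin N)) hr
  push_cast [Fin.natCast_self] at key
  simpa using key.symm

noncomputable def sortedTransversal (c : Fin N → Fin K) : Fin N ↪o ℤ :=
  (transversal c).orderEmbOfFin (card_transversal c)

noncomputable def tableauOf (c : Fin N → Fin K) (p : ℤ × ℤ) : ℤ :=
  periodicExtension (N * K) (sortedTransversal c) p.2 + N * p.1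

theorem sortedTransversal_lt_add (c : Fin N → Fin K) (s t : Fin N) :
    sortedTransversal c s < sortedTransversal c t + N * K := by
  have hs := mem_transversal_bounds (orderEmbOfFin_mem _ (card_transversal c) s)
  have ht := mem_transversal_bounds (orderEmbOfFin_mem _ (card_transversal c) t)
  simp only [sortedTransversal]
  linarith

theorem isDPT_tableauOf (c : Fin N → Fin K) : IsDPT K N 1 0 (tableauOf c) := by
  have hN : (0 : ℤ) < N := by exact_mod_cast Nat.pos_of_ne_zero (NeZero.ne N)
  refine ⟨fun v => ?_, fun x y => ?_, fun x y => ?_, fun x y => ?_, fun x y => ?_⟩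
  · obtain ⟨t, ht, htv⟩ := exists_mem_transversal_intCast_eq c v
    rw [← mem_coe, ← range_orderEmbOfFin _ (card_transversal c)] at ht
    obtain ⟨s, rfl⟩ := ht
    obtain ⟨x, hx⟩ := ((CharP.intCast_eq_intCast (Fin N) N).mp htv).dvd
    refine ⟨(x, s), ?_⟩
    simp only [tableauOf, periodicExtension_natCast, sortedTransversal]
    linarith
  · have h := periodicExtension_add (p := N * K) (w := sortedTransversal c) (y - N)
    rw [sub_add_cancel] at h
    simp only [tableauOf]
    linarith
  · simp only [tableauOf, sub_zero]
    ring
  · simp only [tableauOf]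
    linarith
  · have := periodicExtension_strictMono (sortedTransversal c).strictMono
      (sortedTransversal_lt_add c) (lt_add_one y)
    simp only [tableauOf]
    linarith

theorem tableauOf_zero_zero [NeZero K] {c : Fin N → Fin K} (hc : c 0 = 0) :
    tableauOf c (0, 0) = 0 := by
  obtain ⟨s, hs⟩ : 0 ∈ Set.range (sortedTransversal c) := by
    rw [sortedTransversal, range_orderEmbOfFin, mem_coe, zero_mem_transversal_iff]
    exact hc
  have hle : sortedTransversal c 0 ≤ 0 := hs ▸ (sortedTransversal c).monotone (Fin.zero_le s)
  have hge := (mem_transversal_bounds (orderEmbOfFin_mem _ (card_transversal c) 0)).1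
  have h := periodicExtension_natCast (p := N * K) (w := sortedTransversal c) 0
  rw [Fin.val_zero, Nat.cast_zero] at h
  simpa [tableauOf, h] using le_antisymm hle hge

theorem tableauOf_injective :
    Function.Injective (tableauOf : (Fin N → Fin K) → ℤ × ℤ → ℤ) := by
  intro c c' h
  have hw : sortedTransversal c = sortedTransversal c' := DFunLike.ext _ _ fun s => by
    simpa [tableauOf, periodicExtension_natCast] using congrFun h (0, s)
  apply transversal_injective
  rw [← coe_inj, ← range_orderEmbOfFin _ (card_transversal c),
    ← range_orderEmbOfFin _ (card_transversal c')]
  exact congrArg (fun w : Fin N ↪o ℤ => Set.range w) hw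

theorem exists_tableauOf_eq [NeZero K] (hσ : IsDPT K N 1 0 σ) (h0 : σ (0, 0) = 0) :
    ∃ c : Fin N → Fin K, c 0 = 0 ∧ tableauOf c = σ := by
  obtain ⟨c, hc⟩ :=
    exists_transversal_eq_image (hσ.column_bounds h0) hσ.surjective_column_residue
  have hsorted : (fun s : Fin N => σ (0, s)) = sortedTransversal c :=
    orderEmbOfFin_unique _ (fun s => hc ▸ mem_image_of_mem _ (mem_univ s))
      fun s t hst => hσ.column_strictMono (by exact_mod_cast hst)
  have hc0 : 0 ∈ transversal c := hc ▸ mem_image.2 ⟨0, mem_univ _, by simpa using h0⟩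
  refine ⟨c, (zero_mem_transversal_iff c).1 hc0, ?_⟩
  have hcolumn : ∀ y, σ (0, y) = periodicExtension (N * K) (sortedTransversal c) y := fun y => by
    rw [← hsorted]
    exact congrFun (eq_periodicExtension (f := fun y => σ (0, y)) hσ.column_add) y
  funext ⟨x, y⟩
  rw [tableauOf, ← hcolumn, hσ.apply_eq_add_mul x y]

end Tableau

/-- For `(a,b) = (1,0)` (so `m = N`), the set of `σ ∈ DPT(K,N,1,0)` with
`σ(0,0) = 0` — i.e. `DPT(K,N,1,0)` up to translations — has exactly `K^(N−1)`
elements. -/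
theorem dpt_count_a1_b0 (K : ℤ) (N : ℕ) (hK : 0 < K) (hN : 0 < N) :
    {σ : ℤ × ℤ → ℤ | IsDPT K (N : ℤ) 1 0 σ ∧ σ (0, 0) = 0}.Finite ∧
    (({σ : ℤ × ℤ → ℤ | IsDPT K (N : ℤ) 1 0 σ ∧ σ (0, 0) = 0}.ncard : ℤ)
      = K ^ (N - 1)) := by
  lift K to ℕ using hK.le
  have : NeZero K := ⟨by omega⟩
  have : NeZero N := ⟨hN.ne'⟩
  have hS : {σ : ℤ × ℤ → ℤ | IsDPT K (N : ℤ) 1 0 σ ∧ σ (0, 0) = 0} =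
      tableauOf '' {c : Fin N → Fin K | c 0 = 0} := by
    ext σ
    constructor
    · rintro ⟨hσ, h0⟩
      obtain ⟨c, hc0, rfl⟩ := exists_tableauOf_eq hσ h0
      exact ⟨c, hc0, rfl⟩
    · rintro ⟨c, hc0, rfl⟩
      exact ⟨isDPT_tableauOf c, tableauOf_zero_zero hc0⟩
  rw [hS, Set.ncard_image_of_injective _ tableauOf_injective, Set.ncard_setOf_apply_eq]
  exact ⟨Set.toFinite _, by simp⟩
end
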